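/- arXiv:2603.26080 — 5 statements merged into one kernel-verified Lean document; each statement's English description precedes it below -/
import Mathlib

section
/- Let A ∈ ℝ^{n×n} be Hurwitz, let M, N ∈ ℝ^{n×n} be symmetric, and let P, Y ∈ ℝ^{n×n} be symmetric matrices satisfying AᵀP + PA + M = 0 and AY + YAᵀ + N = 0. Then Tr(MY) = Tr(NP). -/
open Matrix
/-- A square real matrix is Hurwitz if every eigenvalue of it, viewed as a complex
matrix, has negative real part. -/
def IsHurwitz {n : ℕ} (A : Matrix (Fin n) (Fin n) ℝ) : Prop :=
  ∀ μ ∈ spectrum ℂ (A.map (Complex.ofReal)), μ.re < 0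

/-- If `A` is Hurwitz, `M, N` are symmetric and symmetric `P, Y` solve the
Lyapunov equations `AᵀP + PA + M = 0` and `AY + YAᵀ + N = 0`, then `Tr(MY) = Tr(NP)`. -/
theorem trace_pair_of_lyapunov {n : ℕ} (A M N P Y : Matrix (Fin n) (Fin n) ℝ)
    (hA : IsHurwitz A) (hM : M.IsHermitian) (hN : N.IsHermitian)
    (hP : P.IsHermitian) (hY : Y.IsHermitian)
    (hLyapP : Aᵀ * P + P * A + M = 0)
    (hLyapY : A * Y + Y * Aᵀ + N = 0) :
    (M * Y).trace = (N * P).trace := by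
  have hM' : M = -(Aᵀ * P + P * A) := by
    have := hLyapP
    linear_combination (norm := noncomm_ring) this
  have hN' : N = -(A * Y + Y * Aᵀ) := by
    linear_combination (norm := noncomm_ring) hLyapY
  rw [hM', hN']
  simp only [neg_mul, trace_neg, neg_inj, add_mul, trace_add, mul_assoc]
  rw [trace_mul_comm Aᵀ (P * Y), trace_mul_comm P (A * Y)]
  rw [← mul_assoc Y Aᵀ P, trace_mul_comm (Y * Aᵀ) P, ← mul_assoc P Y Aᵀ, mul_assoc A Y P]
  exact add_comm _ _
end

section
/- Let A ∈ ℝ^{n×n} be Hurwitz and let Q ∈ ℝ^{n×n} be symmetric positive definite. Suppose P, Y ∈ ℝ^{n×n} are symmetric positive definite and satisfy AᵀP + PA + Q ⪯ 0 and AY + YAᵀ + Q ⪯ 0. Then λ_min(P) ≥ λ_min(Q)/(2‖A‖) and λ_min(Y) ≥ λ_min(Q)/(2‖A‖). -/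
open Matrix
open scoped RealInnerProductSpace

/-- The spectral (ℓ² operator) norm of a real matrix. -/
noncomputable def matSpectralNorm {m n : ℕ} (A : Matrix (Fin m) (Fin n) ℝ) : ℝ :=
  ‖LinearMap.toContinuousLinearMap (Matrix.toEuclideanLin A)‖

/-- The smallest eigenvalue of a symmetric real matrix. -/
noncomputable def lamMin {n : ℕ} {A : Matrix (Fin n) (Fin n) ℝ}
    (hA : A.IsHermitian) : ℝ :=
  ⨅ i, hA.eigenvalues i

lemma lamMin_le_eigenvalues {n : ℕ} {Q : Matrix (Fin n) (Fin n) ℝ} (hQ : Q.IsHermitian)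
    (i : Fin n) : lamMin hQ ≤ hQ.eigenvalues i :=
  ciInf_le (Finite.bddBelow_range _) i

lemma rayleigh_lower {n : ℕ} {Q : Matrix (Fin n) (Fin n) ℝ} (hQ : Q.IsHermitian)
    (x : Fin n → ℝ) : lamMin hQ * (x ⬝ᵥ x) ≤ x ⬝ᵥ (Q *ᵥ x) := by
  classical
  have h1 : Q - lamMin hQ • (1 : Matrix (Fin n) (Fin n) ℝ) =
      (hQ.eigenvectorUnitary : Matrix (Fin n) (Fin n) ℝ) *
        diagonal (fun i => hQ.eigenvalues i - lamMin hQ) *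
        star (hQ.eigenvectorUnitary : Matrix (Fin n) (Fin n) ℝ) := by
    have hd : diagonal (fun i => hQ.eigenvalues i - lamMin hQ) =
        diagonal ((RCLike.ofReal : ℝ → ℝ) ∘ hQ.eigenvalues)
          - lamMin hQ • (1 : Matrix (Fin n) (Fin n) ℝ) := by
      ext j k
      by_cases h : j = k <;> simp [h, Matrix.one_apply, Matrix.smul_apply, diagonal]
    have hs := hQ.spectral_theorem
    simp only [Unitary.conjStarAlgAut_apply] at hs
    rw [hd, Matrix.mul_sub, Matrix.sub_mul, ← hs]
    congr 1
    rw [Matrix.mul_smul, Matrix.smul_mul, Matrix.mul_one]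
    congr 1
    exact ((Matrix.mem_unitaryGroup_iff).mp hQ.eigenvectorUnitary.2).symm
  have hps : (Q - lamMin hQ • (1 : Matrix (Fin n) (Fin n) ℝ)).PosSemidef := by
    rw [h1]
    exact (posSemidef_diagonal_iff.mpr fun i =>
      sub_nonneg.2 (lamMin_le_eigenvalues hQ i)).mul_mul_conjTranspose_same _
  have h2 := hps.dotProduct_mulVec_nonneg x
  simp only [star_trivial, Matrix.sub_mulVec, Matrix.smul_mulVec, Matrix.one_mulVec,
    dotProduct_sub, dotProduct_smul, smul_eq_mul] at h2
  linarith

lemma abs_dot_mulVec_le {n : ℕ} (A : Matrix (Fin n) (Fin n) ℝ) (x : Fin n → ℝ) :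
    |x ⬝ᵥ (A *ᵥ x)| ≤ matSpectralNorm A * (x ⬝ᵥ x) := by
  set x' : EuclideanSpace ℝ (Fin n) := (WithLp.equiv 2 (Fin n → ℝ)).symm x with hx'
  have hdot : x ⬝ᵥ (A *ᵥ x) = ⟪x', (Matrix.toEuclideanLin A) x'⟫ := by
    rw [hx', WithLp.equiv_symm_apply, Matrix.toEuclideanLin_apply_piLp_toLp, EuclideanSpace.inner_toLp_toLp,
      star_trivial, dotProduct_comm]
  have hxx : x ⬝ᵥ x = ‖x'‖ ^ 2 := by
    rw [← real_inner_self_eq_norm_sq, hx', WithLp.equiv_symm_apply, EuclideanSpace.inner_toLp_toLp, star_trivial]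
  have h1 : |⟪x', (Matrix.toEuclideanLin A) x'⟫| ≤ ‖x'‖ * ‖(Matrix.toEuclideanLin A) x'‖ :=
    abs_real_inner_le_norm _ _
  have h2 : ‖(Matrix.toEuclideanLin A) x'‖ ≤ matSpectralNorm A * ‖x'‖ :=
    (LinearMap.toContinuousLinearMap (Matrix.toEuclideanLin A)).le_opNorm x'
  have h3 : ‖x'‖ * ‖(Matrix.toEuclideanLin A) x'‖ ≤ ‖x'‖ * (matSpectralNorm A * ‖x'‖) :=
    mul_le_mul_of_nonneg_left h2 (norm_nonneg _)
  rw [hdot, hxx]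
  calc |⟪x', (Matrix.toEuclideanLin A) x'⟫| ≤ ‖x'‖ * (matSpectralNorm A * ‖x'‖) := h1.trans h3
    _ = matSpectralNorm A * ‖x'‖ ^ 2 := by ring

lemma key_bound {n : ℕ} (A Q P : Matrix (Fin n) (Fin n) ℝ) (hQ : Q.IsHermitian)
    (hP : P.PosDef) (hnA : 0 < matSpectralNorm A) (i : Fin n)
    (hdot : ⇑(hP.1.eigenvectorBasis i) ⬝ᵥ
        (Q *ᵥ ⇑(hP.1.eigenvectorBasis i)) ≤
      2 * hP.1.eigenvalues i * |⇑(hP.1.eigenvectorBasis i) ⬝ᵥ (A *ᵥ ⇑(hP.1.eigenvectorBasis i))|) :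
    lamMin hQ / (2 * matSpectralNorm A) ≤ hP.1.eigenvalues i := by
  set v : Fin n → ℝ := ⇑(hP.1.eigenvectorBasis i)
  have hvv : v ⬝ᵥ v = 1 := by
    have hnrm := hP.1.eigenvectorBasis.orthonormal.1 i
    have h' : (⟪hP.1.eigenvectorBasis i, hP.1.eigenvectorBasis i⟫) = 1 := by
      rw [real_inner_self_eq_norm_sq, hnrm]; norm_num
    rw [EuclideanSpace.inner_eq_star_dotProduct, star_trivial] at h'
    exact h'
  have hc : 0 < hP.1.eigenvalues i := hP.eigenvalues_pos i
  have h1 : lamMin hQ ≤ v ⬝ᵥ (Q *ᵥ v) := by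
    have := rayleigh_lower hQ v
    rwa [hvv, mul_one] at this
  have h2 : |v ⬝ᵥ (A *ᵥ v)| ≤ matSpectralNorm A := by
    have := abs_dot_mulVec_le A v
    rwa [hvv, mul_one] at this
  have h3 : lamMin hQ ≤ 2 * matSpectralNorm A * hP.1.eigenvalues i := by
    calc lamMin hQ ≤ v ⬝ᵥ (Q *ᵥ v) := h1
      _ ≤ 2 * hP.1.eigenvalues i * |v ⬝ᵥ (A *ᵥ v)| := hdot
      _ ≤ 2 * hP.1.eigenvalues i * matSpectralNorm A := by
          exact mul_le_mul_of_nonneg_left h2 (by positivity)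
      _ = 2 * matSpectralNorm A * hP.1.eigenvalues i := by ring
  rw [div_le_iff₀ (by positivity)]
  linarith

/-- If `A` is Hurwitz, `Q ≻ 0`, and positive definite `P, Y` satisfy
`AᵀP + PA + Q ⪯ 0` and `AY + YAᵀ + Q ⪯ 0`, then
`λ_min(P) ≥ λ_min(Q)/(2‖A‖)` and `λ_min(Y) ≥ λ_min(Q)/(2‖A‖)`. -/
theorem lamMin_lyapunov_lower_bound {n : ℕ} (A Q P Y : Matrix (Fin n) (Fin n) ℝ)
    (hA : IsHurwitz A) (hQ : Q.PosDef) (hP : P.PosDef) (hY : Y.PosDef)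
    (hLyapP : (-(Aᵀ * P + P * A + Q)).PosSemidef)
    (hLyapY : (-(A * Y + Y * Aᵀ + Q)).PosSemidef) :
    lamMin hQ.1 / (2 * matSpectralNorm A) ≤ lamMin hP.1 ∧
      lamMin hQ.1 / (2 * matSpectralNorm A) ≤ lamMin hY.1 := by
  rcases Nat.eq_zero_or_pos n with hn | hn
  · subst hn
    have h0 : ∀ (M : Matrix (Fin 0) (Fin 0) ℝ) (hM : M.IsHermitian), lamMin hM = 0 := by
      intro M hM
      exact Real.iInf_of_isEmpty _
    rw [h0 Q hQ.1, h0 P hP.1, h0 Y hY.1, zero_div]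
    exact ⟨le_refl _, le_refl _⟩
  · haveI : Nonempty (Fin n) := ⟨⟨0, hn⟩⟩
    -- A ≠ 0
    have hAne : A ≠ 0 := by
      intro h0
      have : (0 : ℂ) ∈ spectrum ℂ (A.map (Complex.ofReal)) := by
        rw [spectrum.zero_mem_iff]
        subst h0
        intro h
        rw [show ((0 : Matrix (Fin n) (Fin n) ℝ).map Complex.ofReal) = 0 by
          ext i j; simp] at h
        have hdet := (Matrix.isUnit_iff_isUnit_det _).mp h
        rw [Matrix.det_zero] at hdet
        simpa using hdet
      exact absurd (hA 0 this) (by simp)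
    have hnA : 0 < matSpectralNorm A := by
      rw [matSpectralNorm]
      refine norm_pos_iff.mpr ?_
      intro h0
      apply hAne
      have h1 : Matrix.toEuclideanLin A = 0 :=
        (LinearEquiv.map_eq_zero_iff LinearMap.toContinuousLinearMap).mp h0
      have h2 : Matrix.toEuclideanLin A = Matrix.toEuclideanLin 0 := by
        rw [h1, map_zero]
      exact Matrix.toEuclideanLin.injective h2
    constructor
    · -- P case
      obtain ⟨i, hi⟩ := Finite.exists_min (fun i => hP.1.eigenvalues i)
      have hmin : lamMin hP.1 = hP.1.eigenvalues i :=
        le_antisymm (lamMin_le_eigenvalues hP.1 i) (le_ciInf hi)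
      rw [hmin]
      apply key_bound A Q P hQ.1 hP hnA i
      set v : Fin n → ℝ := ⇑(hP.1.eigenvectorBasis i) with hv
      set c : ℝ := hP.1.eigenvalues i with hcdef
      have heig : P *ᵥ v = c • v := hP.1.mulVec_eigenvectorBasis i
      have hsd := hLyapP.dotProduct_mulVec_nonneg v
      simp only [star_trivial, Matrix.neg_mulVec, dotProduct_neg, Matrix.add_mulVec,
        dotProduct_add, ← Matrix.mulVec_mulVec] at hsd
      rw [heig] at hsd
      have e1 : v ⬝ᵥ (Aᵀ *ᵥ (c • v)) = c * (v ⬝ᵥ (A *ᵥ v)) := by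
        rw [Matrix.mulVec_smul, dotProduct_smul, smul_eq_mul]
        congr 1
        rw [Matrix.dotProduct_mulVec, Matrix.vecMul_transpose, dotProduct_comm]
      have hPt : Pᵀ = P := by
        rw [← Matrix.conjTranspose_eq_transpose_of_trivial]; exact hP.1
      have e2 : v ⬝ᵥ (P *ᵥ (A *ᵥ v)) = c * (v ⬝ᵥ (A *ᵥ v)) := by
        rw [Matrix.dotProduct_mulVec, ← Matrix.mulVec_transpose, hPt, heig,
          smul_dotProduct, smul_eq_mul]
      rw [e1, e2] at hsd
      have hbound : v ⬝ᵥ (Q *ᵥ v) ≤ 2 * c * |v ⬝ᵥ (A *ᵥ v)| := by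
        have habs : -(v ⬝ᵥ (A *ᵥ v)) ≤ |v ⬝ᵥ (A *ᵥ v)| := neg_le_abs _
        have hc : 0 < c := hP.eigenvalues_pos i
        nlinarith [abs_nonneg (v ⬝ᵥ (A *ᵥ v))]
      exact hbound
    · -- Y case
      obtain ⟨i, hi⟩ := Finite.exists_min (fun i => hY.1.eigenvalues i)
      have hmin : lamMin hY.1 = hY.1.eigenvalues i :=
        le_antisymm (lamMin_le_eigenvalues hY.1 i) (le_ciInf hi)
      rw [hmin]
      apply key_bound A Q Y hQ.1 hY hnA i
      set v : Fin n → ℝ := ⇑(hY.1.eigenvectorBasis i) with hv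
      set c : ℝ := hY.1.eigenvalues i with hcdef
      have heig : Y *ᵥ v = c • v := hY.1.mulVec_eigenvectorBasis i
      have hsd := hLyapY.dotProduct_mulVec_nonneg v
      simp only [star_trivial, Matrix.neg_mulVec, dotProduct_neg, Matrix.add_mulVec,
        dotProduct_add, ← Matrix.mulVec_mulVec] at hsd
      rw [heig] at hsd
      have e1 : v ⬝ᵥ (A *ᵥ (c • v)) = c * (v ⬝ᵥ (A *ᵥ v)) := by
        rw [Matrix.mulVec_smul, dotProduct_smul, smul_eq_mul]
      have hYt : Yᵀ = Y := by
        rw [← Matrix.conjTranspose_eq_transpose_of_trivial]; exact hY.1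
      have e2 : v ⬝ᵥ (Y *ᵥ (Aᵀ *ᵥ v)) = c * (v ⬝ᵥ (A *ᵥ v)) := by
        rw [Matrix.dotProduct_mulVec, ← Matrix.mulVec_transpose, hYt, heig,
          smul_dotProduct, smul_eq_mul]
        congr 1
        rw [Matrix.dotProduct_mulVec, Matrix.vecMul_transpose, dotProduct_comm]
      rw [e1, e2] at hsd
      have habs : -(v ⬝ᵥ (A *ᵥ v)) ≤ |v ⬝ᵥ (A *ᵥ v)| := neg_le_abs _
      have hc : 0 < c := hY.eigenvalues_pos i
      nlinarith [abs_nonneg (v ⬝ᵥ (A *ᵥ v))]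
end

section
/- Let A ∈ ℝ^{n×n}, B ∈ ℝ^{n×m}, K ∈ ℝ^{m×n} be such that A − BK is Hurwitz, and let Q ∈ ℝ^{n×n}, R ∈ ℝ^{m×m} be symmetric positive definite. Let P, Y ∈ ℝ^{n×n} be symmetric positive semidefinite matrices satisfying (A − BK)ᵀP + P(A − BK) + Q + KᵀRK = 0 and (A − BK)Y + Y(A − BK)ᵀ + I_n = 0. Then ‖P‖ ≤ ‖P‖_F ≤ Tr(P) and ‖Y‖ ≤ ‖Y‖_F ≤ Tr(Y) ≤ Tr(P)/λ_min(Q). -/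
open Matrix

/-- The Frobenius norm of a real matrix. -/
noncomputable def frobNorm {m n : ℕ} (A : Matrix (Fin m) (Fin n) ℝ) : ℝ :=
  Real.sqrt (∑ i, ∑ j, A i j ^ 2)

/-! ### Auxiliary lemmas -/

lemma frobNorm_nonneg {m n : ℕ} (A : Matrix (Fin m) (Fin n) ℝ) : 0 ≤ frobNorm A :=
  Real.sqrt_nonneg _

lemma spectralNorm_le_frobNorm {m n : ℕ} (A : Matrix (Fin m) (Fin n) ℝ) :
    matSpectralNorm A ≤ frobNorm A := by
  apply ContinuousLinearMap.opNorm_le_bound _ (frobNorm_nonneg A)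
  intro x
  rw [LinearMap.coe_toContinuousLinearMap']
  rw [EuclideanSpace.norm_eq, EuclideanSpace.norm_eq]
  have hcoord : ∀ i, (Matrix.toEuclideanLin A x) i = ∑ j, A i j * x j := by
    intro i
    rfl
  calc Real.sqrt (∑ i, ‖(Matrix.toEuclideanLin A x) i‖ ^ 2)
      = Real.sqrt (∑ i, (∑ j, A i j * x j) ^ 2) := by
        congr 1; apply Finset.sum_congr rfl; intro i _
        rw [hcoord i, Real.norm_eq_abs, sq_abs]
    _ ≤ Real.sqrt (∑ i, (∑ j, A i j ^ 2) * (∑ j, x j ^ 2)) := by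
        apply Real.sqrt_le_sqrt
        apply Finset.sum_le_sum
        intro i _
        exact Finset.sum_mul_sq_le_sq_mul_sq _ _ _
    _ = frobNorm A * Real.sqrt (∑ j, ‖x j‖ ^ 2) := by
        rw [← Finset.sum_mul, Real.sqrt_mul (by positivity)]
        congr 2
        apply Finset.sum_congr rfl; intro j _
        rw [Real.norm_eq_abs, sq_abs]

lemma psd_diag_nonneg {n : ℕ} {M : Matrix (Fin n) (Fin n) ℝ} (hM : M.PosSemidef) (i : Fin n) :
    0 ≤ M i i := by
  have := hM.dotProduct_mulVec_nonneg (Pi.single i 1)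
  simpa [dotProduct, mulVec, Pi.single_apply, Finset.mul_sum] using this

lemma psd_quadform {n : ℕ} (M : Matrix (Fin n) (Fin n) ℝ) (i j : Fin n) (t : ℝ) :
    (fun k => (Pi.single i 1 : Fin n → ℝ) k + t * (Pi.single j 1 : Fin n → ℝ) k) ⬝ᵥ
      (M *ᵥ (fun k => (Pi.single i 1 : Fin n → ℝ) k + t * (Pi.single j 1 : Fin n → ℝ) k))
      = M i i + t * M i j + t * M j i + t^2 * M j j := by
  simp [dotProduct, mulVec, Pi.single_apply, Finset.mul_sum, mul_add, add_mul,
    Finset.sum_add_distrib, mul_ite, ite_mul, Finset.sum_ite_eq, Finset.sum_ite_eq']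
  ring

lemma psd_entry_sq_le {n : ℕ} {M : Matrix (Fin n) (Fin n) ℝ} (hM : M.PosSemidef)
    (i j : Fin n) : M i j ^ 2 ≤ M i i * M j j := by
  have hsym : M j i = M i j := by
    have := hM.1
    conv_lhs => rw [← this]
    simp [conjTranspose_apply]
  have hquad : ∀ t : ℝ, 0 ≤ M j j * (t * t) + (2 * M i j) * t + M i i := by
    intro t
    have h2 := hM.dotProduct_mulVec_nonneg (fun k => (Pi.single i 1 : Fin n → ℝ) k + t * (Pi.single j 1 : Fin n → ℝ) k)
    rw [show star (fun k => (Pi.single i 1 : Fin n → ℝ) k + t * (Pi.single j 1 : Fin n → ℝ) k)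
        = (fun k => (Pi.single i 1 : Fin n → ℝ) k + t * (Pi.single j 1 : Fin n → ℝ) k) from rfl] at h2
    rw [psd_quadform, hsym, pow_two] at h2
    linarith [h2]
  have hd := discrim_le_zero hquad
  rw [discrim] at hd
  nlinarith [hd]

lemma psd_trace_nonneg {n : ℕ} {M : Matrix (Fin n) (Fin n) ℝ} (hM : M.PosSemidef) :
    0 ≤ M.trace := by
  rw [Matrix.trace]
  exact Finset.sum_nonneg fun i _ => psd_diag_nonneg hM i

lemma frobNorm_le_trace {n : ℕ} {M : Matrix (Fin n) (Fin n) ℝ} (hM : M.PosSemidef) :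
    frobNorm M ≤ M.trace := by
  rw [frobNorm]
  have h1 : (∑ i, ∑ j, M i j ^ 2) ≤ M.trace ^ 2 := by
    have : M.trace ^ 2 = ∑ i, ∑ j, M i i * M j j := by
      rw [Matrix.trace, pow_two, Finset.sum_mul_sum]
      rfl
    rw [this]
    exact Finset.sum_le_sum fun i _ => Finset.sum_le_sum fun j _ => psd_entry_sq_le hM i j
  calc Real.sqrt (∑ i, ∑ j, M i j ^ 2) ≤ Real.sqrt (M.trace ^ 2) := Real.sqrt_le_sqrt h1
    _ = |M.trace| := Real.sqrt_sq_eq_abs _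
    _ = M.trace := abs_of_nonneg (psd_trace_nonneg hM)

lemma trace_mul_psd_nonneg {n : ℕ} {M N : Matrix (Fin n) (Fin n) ℝ}
    (hM : M.PosSemidef) (hN : N.PosSemidef) : 0 ≤ (M * N).trace := by
  open scoped MatrixOrder in
  have hS : (CFC.sqrt M).PosSemidef := (CFC.sqrt_nonneg M).posSemidef
  have hSh : (CFC.sqrt M).conjTranspose = CFC.sqrt M := hS.1
  have key : (M * N).trace = ((CFC.sqrt M)ᴴ * N * CFC.sqrt M).trace := by
    rw [hSh]
    open scoped MatrixOrder in
    conv_lhs => rw [← CFC.sqrt_mul_sqrt_self M hM.nonneg]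
    rw [Matrix.mul_assoc, Matrix.trace_mul_comm, Matrix.mul_assoc]
  rw [key]
  exact psd_trace_nonneg (hN.conjTranspose_mul_mul_same _)

lemma lamMin_le {n : ℕ} {A : Matrix (Fin n) (Fin n) ℝ} (hA : A.IsHermitian) (i : Fin n) :
    lamMin hA ≤ hA.eigenvalues i :=
  ciInf_le (Finite.bddBelow_range _) i

lemma lamMin_pos {n : ℕ} [NeZero n] {A : Matrix (Fin n) (Fin n) ℝ} (hA : A.PosDef) :
    0 < lamMin hA.1 := by
  have h : ∀ i, 0 < hA.1.eigenvalues i := hA.eigenvalues_pos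
  obtain ⟨i0, hi0⟩ := Finite.exists_min hA.1.eigenvalues
  have : hA.1.eigenvalues i0 ≤ lamMin hA.1 := le_ciInf hi0
  linarith [h i0]

lemma sub_smul_posSemidef {n : ℕ} {A : Matrix (Fin n) (Fin n) ℝ}
    (hA : A.IsHermitian) (c : ℝ) (hc : ∀ i, c ≤ hA.eigenvalues i) :
    (A - c • 1).PosSemidef := by
  have hU : (hA.eigenvectorUnitary : Matrix (Fin n) (Fin n) ℝ) *
      star (hA.eigenvectorUnitary : Matrix (Fin n) (Fin n) ℝ) = 1 :=
    (Matrix.mem_unitaryGroup_iff).mp hA.eigenvectorUnitary.2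
  nth_rewrite 1 [hA.spectral_theorem]
  rw [Unitary.conjStarAlgAut_apply]
  have hone : (c • (1 : Matrix (Fin n) (Fin n) ℝ)) =
      (hA.eigenvectorUnitary : Matrix (Fin n) (Fin n) ℝ) *
        (c • (1 : Matrix (Fin n) (Fin n) ℝ)) *
        star (hA.eigenvectorUnitary : Matrix (Fin n) (Fin n) ℝ) := by
    rw [Matrix.mul_smul, Matrix.mul_one, Matrix.smul_mul, hU]
  rw [hone, ← Matrix.sub_mul, ← Matrix.mul_sub]
  have hdd : diagonal (RCLike.ofReal ∘ hA.eigenvalues) - c • (1 : Matrix (Fin n) (Fin n) ℝ)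
      = diagonal (fun i => hA.eigenvalues i - c) := by
    rw [smul_one_eq_diagonal, ← diagonal_sub]
    rfl
  rw [hdd]
  have hdiag : (diagonal (fun i => hA.eigenvalues i - c)).PosSemidef :=
    Matrix.PosSemidef.diagonal fun i => by simpa using hc i
  have := hdiag.mul_mul_conjTranspose_same
      (hA.eigenvectorUnitary : Matrix (Fin n) (Fin n) ℝ)
  simpa [Matrix.star_eq_conjTranspose] using this

lemma sub_lamMin_smul_posSemidef {n : ℕ} {A : Matrix (Fin n) (Fin n) ℝ}
    (hA : A.IsHermitian) : (A - lamMin hA • 1).PosSemidef :=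
  sub_smul_posSemidef hA _ (lamMin_le hA)

/-- Bounds on the LQR Lyapunov solutions: if `A − BK` is Hurwitz,
`Q, R ≻ 0`, and `P, Y ⪰ 0` solve `(A−BK)ᵀP + P(A−BK) + Q + KᵀRK = 0` and
`(A−BK)Y + Y(A−BK)ᵀ + I = 0`, then `‖P‖ ≤ ‖P‖_F ≤ Tr(P)` and
`‖Y‖ ≤ ‖Y‖_F ≤ Tr(Y) ≤ Tr(P)/λ_min(Q)`. -/
theorem lyapunov_solution_norm_bounds {n m : ℕ}
    (A : Matrix (Fin n) (Fin n) ℝ) (B : Matrix (Fin n) (Fin m) ℝ)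
    (K : Matrix (Fin m) (Fin n) ℝ)
    (Q : Matrix (Fin n) (Fin n) ℝ) (R : Matrix (Fin m) (Fin m) ℝ)
    (hHurwitz : IsHurwitz (A - B * K)) (hQ : Q.PosDef) (hR : R.PosDef)
    (P Y : Matrix (Fin n) (Fin n) ℝ) (hP : P.PosSemidef) (hY : Y.PosSemidef)
    (hLyapP : (A - B * K)ᵀ * P + P * (A - B * K) + Q + Kᵀ * R * K = 0)
    (hLyapY : (A - B * K) * Y + Y * (A - B * K)ᵀ + 1 = 0) :
    matSpectralNorm P ≤ frobNorm P ∧ frobNorm P ≤ P.trace ∧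
      matSpectralNorm Y ≤ frobNorm Y ∧ frobNorm Y ≤ Y.trace ∧
        Y.trace ≤ P.trace / lamMin hQ.1 := by
  refine ⟨spectralNorm_le_frobNorm P, frobNorm_le_trace hP,
    spectralNorm_le_frobNorm Y, frobNorm_le_trace hY, ?_⟩
  rcases Nat.eq_zero_or_pos n with h0 | hpos
  · subst h0
    have hYt : Y.trace = 0 := by simp [Matrix.trace]
    have hPt : P.trace = 0 := by simp [Matrix.trace]
    rw [hYt, hPt, zero_div]
  · haveI : NeZero n := ⟨by omega⟩
    set lam := lamMin hQ.1 with hlamdef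
    have hlam : 0 < lam := lamMin_pos hQ
    have hQlam : (Q - lam • 1).PosSemidef := sub_lamMin_smul_posSemidef hQ.1
    set Ac := A - B * K with hAc
    have e1 : Q + Kᵀ * R * K = -(Acᵀ * P + P * Ac) := by
      rw [eq_neg_iff_add_eq_zero, ← hLyapP]; abel
    have e2 : (1 : Matrix (Fin n) (Fin n) ℝ) = -(Ac * Y + Y * Acᵀ) := by
      rw [eq_neg_iff_add_eq_zero, ← hLyapY]; abel
    have hKRK : (Kᵀ * R * K).PosSemidef := by
      have := hR.posSemidef.conjTranspose_mul_mul_same K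
      simpa [Matrix.conjTranspose_eq_transpose_of_trivial] using this
    have hid : P.trace = ((Q + Kᵀ * R * K) * Y).trace := by
      calc P.trace = (P * 1).trace := by rw [Matrix.mul_one]
        _ = (P * -(Ac * Y + Y * Acᵀ)).trace := by rw [← e2]
        _ = -((P * (Ac * Y)).trace + (P * (Y * Acᵀ)).trace) := by
            rw [Matrix.mul_neg, Matrix.trace_neg, Matrix.mul_add, Matrix.trace_add]
        _ = -(((P * Ac) * Y).trace + ((Acᵀ * P) * Y).trace) := by
            rw [← Matrix.mul_assoc]
            congr 2
            rw [← Matrix.mul_assoc, Matrix.trace_mul_comm, Matrix.mul_assoc]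
        _ = ((-(Acᵀ * P + P * Ac)) * Y).trace := by
            rw [Matrix.neg_mul, Matrix.trace_neg, Matrix.add_mul, Matrix.trace_add]
            ring
        _ = ((Q + Kᵀ * R * K) * Y).trace := by rw [← e1]
    have hsplit : P.trace = (Q * Y).trace + ((Kᵀ * R * K) * Y).trace := by
      rw [hid, Matrix.add_mul, Matrix.trace_add]
    have h1 : 0 ≤ ((Kᵀ * R * K) * Y).trace := trace_mul_psd_nonneg hKRK hY
    have h2 : 0 ≤ ((Q - lam • 1) * Y).trace := trace_mul_psd_nonneg hQlam hY
    have h3 : ((Q - lam • 1) * Y).trace = (Q * Y).trace - lam * Y.trace := by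
      rw [Matrix.sub_mul, Matrix.trace_sub, Matrix.smul_mul, Matrix.one_mul, Matrix.trace_smul]
      rfl
    rw [le_div_iff₀ hlam]
    rw [h3] at h2
    linarith
end

section
/- Let A ∈ ℝ^{n×n} be Hurwitz, let c > 0, and let M ∈ ℝ^{n×n} be symmetric with M ⪰ c·I_n. Let P ∈ ℝ^{n×n} be the symmetric matrix satisfying AᵀP + PA + M = 0. Then the improper integral ∫₀^∞ exp(tAᵀ)·exp(tA) dt converges and satisfies ∫₀^∞ exp(tAᵀ)·exp(tA) dt ⪯ c⁻¹·P. -/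
open Matrix MeasureTheory

attribute [local instance] Matrix.frobeniusNormedAddCommGroup Matrix.frobeniusNormedSpace
section Aux
attribute [local instance] Matrix.frobeniusNormedRing Matrix.frobeniusNormedAlgebra

open NormedSpace Filter
open scoped NNReal ENNReal Topology

noncomputable def matENormedAddCommMonoid {n : ℕ} :
    ENormedAddCommMonoid (Matrix (Fin n) (Fin n) ℝ) :=
  NormedAddCommGroup.toENormedAddCommMonoid

def matPseudoMetrizableSpace {n : ℕ} :
    TopologicalSpace.PseudoMetrizableSpace (Matrix (Fin n) (Fin n) ℝ) :=
  TopologicalSpace.pseudoMetrizableSpace_pi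

attribute [local instance] matENormedAddCommMonoid matPseudoMetrizableSpace

namespace HurwitzAux
variable {n : ℕ}

noncomputable def mulVecL (v : Fin n → ℂ) : Matrix (Fin n) (Fin n) ℂ →ₗ[ℂ] (Fin n → ℂ) where
  toFun := fun M => M.mulVec v
  map_add' := fun M N => Matrix.add_mulVec M N v
  map_smul' := fun c M => Matrix.smul_mulVec c M v

lemma exists_eigvec (B : Matrix (Fin n) (Fin n) ℂ) {μ : ℂ} (hμ : μ ∈ spectrum ℂ B) :
    ∃ v : Fin n → ℂ, v ≠ 0 ∧ B.mulVec v = μ • v := by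
  rw [spectrum.mem_iff] at hμ
  have hdet : (algebraMap ℂ (Matrix (Fin n) (Fin n) ℂ) μ - B).det = 0 := by
    by_contra h
    exact hμ ((Matrix.isUnit_iff_isUnit_det _).mpr (isUnit_iff_ne_zero.mpr h))
  obtain ⟨v, hv0, hv⟩ := (Matrix.exists_mulVec_eq_zero_iff).mpr hdet
  refine ⟨v, hv0, ?_⟩
  rw [Matrix.sub_mulVec, Algebra.algebraMap_eq_smul_one, Matrix.smul_mulVec,
    Matrix.one_mulVec, sub_eq_zero] at hv
  exact hv.symm

lemma pow_mulVec_eigvec (B : Matrix (Fin n) (Fin n) ℂ) {μ : ℂ} {v : Fin n → ℂ}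
    (hv : B.mulVec v = μ • v) (k : ℕ) : (B ^ k).mulVec v = μ ^ k • v := by
  induction k with
  | zero => simp [Matrix.one_mulVec]
  | succ k ih =>
      rw [pow_succ, ← Matrix.mulVec_mulVec, hv, Matrix.mulVec_smul, ih, smul_smul, pow_succ]
      ring_nf

lemma aeval_mulVec_eigvec (B : Matrix (Fin n) (Fin n) ℂ) {μ : ℂ} {v : Fin n → ℂ}
    (hv : B.mulVec v = μ • v) (p : Polynomial ℂ) :
    (Polynomial.aeval B p).mulVec v = p.eval μ • v := by
  rw [Polynomial.aeval_eq_sum_range, Polynomial.eval_eq_sum_range]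
  show mulVecL v _ = _
  rw [map_sum, Finset.sum_smul]
  refine Finset.sum_congr rfl fun i _ => ?_
  show (p.coeff i • B ^ i).mulVec v = _
  rw [Matrix.smul_mulVec, pow_mulVec_eigvec B hv, smul_smul]

lemma exp_mulVec_eigvec (B : Matrix (Fin n) (Fin n) ℂ) {μ : ℂ} {v : Fin n → ℂ}
    (hv : B.mulVec v = μ • v) :
    (exp B).mulVec v = Complex.exp μ • v := by
  classical
  have hL : Continuous (mulVecL v) := (mulVecL v).continuous_of_finiteDimensional
  have h1 : HasSum (fun k : ℕ => ((k.factorial : ℂ)⁻¹ • B ^ k)) (exp B) := by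
    exact NormedSpace.exp_series_hasSum_exp' (𝕂 := ℂ) B
  have h2 : HasSum (fun k : ℕ => mulVecL v ((k.factorial : ℂ)⁻¹ • B ^ k))
      (mulVecL v (exp B)) := h1.map ((mulVecL v).toAddMonoidHom) hL
  have h3 : ∀ k : ℕ, mulVecL v ((k.factorial : ℂ)⁻¹ • B ^ k)
      = ((k.factorial : ℂ)⁻¹ * μ ^ k) • v := by
    intro k
    show ((k.factorial : ℂ)⁻¹ • B ^ k).mulVec v = _
    rw [Matrix.smul_mulVec, pow_mulVec_eigvec B hv, smul_smul]
  rw [funext h3] at h2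
  have h4 : HasSum (fun k : ℕ => (k.factorial : ℂ)⁻¹ * μ ^ k) (Complex.exp μ) := by
    have := NormedSpace.exp_series_hasSum_exp' (𝕂 := ℂ) (𝔸 := ℂ) μ
    simpa [smul_eq_mul, Complex.exp_eq_exp_ℂ] using this
  exact h2.unique (h4.smul_const v)

lemma exp_mem_adjoin (B : Matrix (Fin n) (Fin n) ℂ) :
    exp B ∈ Algebra.adjoin ℂ {B} := by
  have hclosed : IsClosed ((Subalgebra.toSubmodule (Algebra.adjoin ℂ {B}) : Submodule ℂ _) :
      Set (Matrix (Fin n) (Fin n) ℂ)) :=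
    Submodule.closed_of_finiteDimensional _
  have h1 : HasSum (fun k : ℕ => ((k.factorial : ℂ)⁻¹ • B ^ k)) (exp B) := by
    exact NormedSpace.exp_series_hasSum_exp' (𝕂 := ℂ) B
  have h2 := h1.tendsto_sum_nat
  refine hclosed.mem_of_tendsto h2 (Filter.Eventually.of_forall fun N => ?_)
  refine Submodule.sum_mem _ fun k _ => Submodule.smul_mem _ _ ?_
  exact Subalgebra.pow_mem _ (Algebra.self_mem_adjoin_singleton ℂ B) k


lemma spectralRadius_exp_lt_one [NeZero n] (B : Matrix (Fin n) (Fin n) ℂ)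
    (hB : ∀ μ ∈ spectrum ℂ B, μ.re < 0) :
    spectralRadius ℂ (exp B) < 1 := by
  obtain ⟨p, hp⟩ : ∃ p : Polynomial ℂ, Polynomial.aeval B p = exp B := by
    have := exp_mem_adjoin B
    rw [Algebra.adjoin_singleton_eq_range_aeval] at this
    exact this
  have key : ∀ z ∈ spectrum ℂ (exp B), ‖z‖₊ < 1 := by
    intro z hz
    rw [← hp, spectrum.map_polynomial_aeval] at hz
    obtain ⟨μ, hμ, rfl⟩ := hz
    obtain ⟨v, hv0, hv⟩ := exists_eigvec B hμ
    have h1 : (Polynomial.aeval B p).mulVec v = p.eval μ • v := aeval_mulVec_eigvec B hv p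
    have h2 : (Polynomial.aeval B p).mulVec v = Complex.exp μ • v := by
      rw [hp]; exact exp_mulVec_eigvec B hv
    have h3 : p.eval μ = Complex.exp μ := by
      have heq : p.eval μ • v - Complex.exp μ • v = 0 := by
        rw [h1.symm.trans h2]; simp
      rw [← sub_smul, smul_eq_zero] at heq
      rcases heq with h | h
      · exact sub_eq_zero.mp h
      · exact absurd h hv0
    show ‖p.eval μ‖₊ < 1
    rw [h3]
    have : ‖Complex.exp μ‖ < 1 := by
      rw [Complex.norm_exp]
      exact Real.exp_lt_one_iff.mpr (hB μ hμ)
    exact this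
  exact spectrum.spectralRadius_lt_of_forall_lt _ (by exact_mod_cast key)



lemma exists_pow_norm_le [NeZero n] (B : Matrix (Fin n) (Fin n) ℂ)
    (hB : ∀ μ ∈ spectrum ℂ B, μ.re < 0) :
    ∃ (ρ : ℝ≥0) (N : ℕ), 0 < ρ ∧ ρ < 1 ∧ ∀ k ≥ N, ‖(exp B) ^ k‖₊ ≤ ρ ^ k := by
  have hr : spectralRadius ℂ (exp B) < 1 := spectralRadius_exp_lt_one B hB
  obtain ⟨ρ', hρ'1, hρ'2⟩ := ENNReal.lt_iff_exists_nnreal_btwn.mp hr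
  set ρ : ℝ≥0 := max ρ' (1/2) with hρdef
  have hρ0 : 0 < ρ := lt_of_lt_of_le (by norm_num) (le_max_right _ _)
  have hρ1 : ρ < 1 := by
    exact max_lt (by exact_mod_cast hρ'2) (half_lt_self one_pos)
  have hrρ : spectralRadius ℂ (exp B) < (ρ : ℝ≥0∞) :=
    lt_of_lt_of_le hρ'1 (by exact_mod_cast le_max_left _ _)
  have hg := spectrum.pow_nnnorm_pow_one_div_tendsto_nhds_spectralRadius (exp B)
  have hev : ∀ᶠ k : ℕ in atTop,
      (‖(exp B) ^ k‖₊ : ℝ≥0∞) ^ (1 / (k : ℝ)) < (ρ : ℝ≥0∞) :=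
    hg.eventually_lt_const hrρ
  obtain ⟨N, hN⟩ := (hev.and (eventually_ge_atTop 1)).exists_forall_of_atTop
  refine ⟨ρ, N, hρ0, hρ1, fun k hk => ?_⟩
  obtain ⟨h1, h2⟩ := hN k hk
  have hk0 : (k : ℝ) ≠ 0 := Nat.cast_ne_zero.mpr (by omega)
  have h3 := ENNReal.rpow_le_rpow h1.le (Nat.cast_nonneg k : (0:ℝ) ≤ k)
  rw [← ENNReal.rpow_mul, one_div, inv_mul_cancel₀ hk0, ENNReal.rpow_one,
    ENNReal.rpow_natCast] at h3
  have h4 : ((ρ : ℝ≥0∞)) ^ k = ((ρ ^ k : ℝ≥0) : ℝ≥0∞) := by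
    push_cast; rfl
  rw [h4] at h3
  exact_mod_cast h3

lemma map_exp_ofReal (A : Matrix (Fin n) (Fin n) ℝ) :
    (exp A).map Complex.ofReal = exp (A.map Complex.ofReal) := by
  let φ : Matrix (Fin n) (Fin n) ℝ →+* Matrix (Fin n) (Fin n) ℂ :=
    (Complex.ofRealHom).mapMatrix
  have hiso : Isometry φ := AddMonoidHomClass.isometry_of_norm φ
    (fun M => Matrix.frobenius_norm_map_eq M Complex.ofReal (fun a => Complex.norm_real a))
  have h1 : φ (exp A) = exp (φ A) := map_exp φ hiso.continuous A
  have h2 : (exp : Matrix (Fin n) (Fin n) ℂ → _) = exp := rfl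
  calc (exp A).map Complex.ofReal = φ (exp A) := rfl
    _ = exp (φ A) := h1
    _ = exp (A.map Complex.ofReal) := by rw [h2]; rfl

lemma norm_exp_real_eq (A : Matrix (Fin n) (Fin n) ℝ) (t : ℝ) :
    ‖exp (t • A)‖ = ‖exp (t • A.map Complex.ofReal)‖ := by
  have h0 : (t • A).map Complex.ofReal = t • A.map Complex.ofReal := by
    ext i j
    simp [Complex.ofReal_mul, Complex.real_smul]
  rw [← Matrix.frobenius_norm_map_eq (exp (t • A)) Complex.ofReal
    (fun a => Complex.norm_real a), map_exp_ofReal, h0]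

lemma norm_exp_decay (A : Matrix (Fin n) (Fin n) ℝ) (hA : IsHurwitz A) :
    ∃ C > 0, ∃ ε > 0, ∀ t : ℝ, 0 ≤ t → ‖exp (t • A)‖ ≤ C * Real.exp (-(ε * t)) := by
  rcases Nat.eq_zero_or_pos n with hn | hn
  · refine ⟨1, one_pos, 1, one_pos, fun t ht => ?_⟩
    haveI : IsEmpty (Fin n) := by rw [hn]; exact Fin.isEmpty'
    have : exp (t • A) = 0 := Subsingleton.elim _ _
    rw [this, norm_zero]
    positivity
  haveI : NeZero n := ⟨hn.ne'⟩
  set B := A.map Complex.ofReal with hBdef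
  obtain ⟨ρ, N, hρ0, hρ1, hN⟩ := exists_pow_norm_le B hA
  have hcont : Continuous (fun s : ℝ => exp (s • B)) :=
    (exp_continuous).comp (continuous_id.smul continuous_const)
  obtain ⟨K, hK⟩ := (isCompact_Icc (a := (0:ℝ)) (b := (N:ℝ)+2)).exists_bound_of_continuousOn
    hcont.continuousOn
  have hK0 : 0 ≤ K := le_trans (norm_nonneg _) (hK 0 (by constructor <;> positivity))
  set ε : ℝ := -Real.log ρ with hεdef
  have hρ0' : (0:ℝ) < ρ := hρ0
  have hρ1' : (ρ:ℝ) < 1 := hρ1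
  have hε : 0 < ε := by
    have := Real.log_neg hρ0' hρ1'
    linarith
  have hρk : ∀ k : ℕ, (ρ : ℝ) ^ k = Real.exp (-(ε * k)) := by
    intro k
    rw [hεdef]
    rw [neg_mul, neg_neg, mul_comm, Real.exp_nat_mul, Real.exp_log hρ0']
  refine ⟨(K + 1) * Real.exp (ε * ((N:ℝ)+2)), by positivity, ε, hε, fun t ht => ?_⟩
  rw [norm_exp_real_eq]
  rcases le_or_gt t ((N:ℝ)+2) with hcase | hcase
  · have hb := hK t ⟨ht, hcase⟩
    have h1 : Real.exp (ε * ((N:ℝ)+2)) * Real.exp (-(ε * t)) = Real.exp (ε * ((N:ℝ)+2) - ε * t) := by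
      rw [← Real.exp_add]; ring_nf
    have h2 : (1:ℝ) ≤ Real.exp (ε * ((N:ℝ)+2) - ε * t) := by
      apply Real.one_le_exp
      nlinarith
    calc ‖exp (t • B)‖ ≤ K := hb
      _ ≤ (K + 1) * Real.exp (ε * ((N:ℝ)+2) - ε * t) := by nlinarith
      _ = (K + 1) * Real.exp (ε * ((N:ℝ)+2)) * Real.exp (-(ε * t)) := by
          rw [mul_assoc, h1]
  · set k : ℕ := ⌊t⌋₊ with hkdef
    have hk1 : (k : ℝ) ≤ t := Nat.floor_le ht
    have hk2 : t < (k : ℝ) + 1 := Nat.lt_floor_add_one t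
    have hkN : N ≤ k := by
      have : (N : ℝ) + 1 < (k : ℝ) + 1 := by linarith
      exact_mod_cast (by linarith : (N:ℝ) < (k:ℝ)).le
    set s : ℝ := t - k with hsdef
    have hs0 : 0 ≤ s := by simp [hsdef]; linarith
    have hs1 : s ≤ 1 := by simp [hsdef]; linarith
    have hsplit : exp (t • B) = exp (s • B) * exp ((k:ℝ) • B) := by
      rw [← Matrix.exp_add_of_commute _ _ (((Commute.refl B).smul_left s).smul_right (k:ℝ))]
      congr 1
      rw [← add_smul]
      congr 1
      simp [hsdef]
    have hpow : exp ((k:ℝ) • B) = (exp B) ^ k := by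
      rw [Nat.cast_smul_eq_nsmul ℝ k B]
      exact NormedSpace.exp_nsmul k B
    have hb1 : ‖exp (s • B)‖ ≤ K := hK s ⟨hs0, by linarith⟩
    have hb2 : ‖(exp B) ^ k‖ ≤ (ρ:ℝ) ^ k := by
      have := hN k hkN
      exact_mod_cast this
    have hb3 : ‖exp (t • B)‖ ≤ K * (ρ:ℝ) ^ k := by
      rw [hsplit, hpow]
      exact le_trans (norm_mul_le _ _) (mul_le_mul hb1 hb2 (norm_nonneg _) hK0)
    have hb4 : (ρ:ℝ) ^ k ≤ Real.exp ε * Real.exp (-(ε * t)) := by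
      rw [hρk k, ← Real.exp_add]
      apply Real.exp_le_exp.mpr
      nlinarith
    calc ‖exp (t • B)‖ ≤ K * (ρ:ℝ) ^ k := hb3
      _ ≤ K * (Real.exp ε * Real.exp (-(ε * t))) :=
          mul_le_mul_of_nonneg_left hb4 hK0
      _ = (K * Real.exp ε) * Real.exp (-(ε * t)) := by ring
      _ ≤ (K + 1) * Real.exp (ε * ((N:ℝ)+2)) * Real.exp (-(ε * t)) := by
          have he1 : Real.exp ε ≤ Real.exp (ε * ((N:ℝ)+2)) := by
            apply Real.exp_le_exp.mpr
            nlinarith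
          have he2 : (0:ℝ) < Real.exp (-(ε * t)) := Real.exp_pos _
          have he3 : (0:ℝ) < Real.exp ε := Real.exp_pos _
          have h5 : K * Real.exp ε ≤ (K + 1) * Real.exp (ε * ((N:ℝ)+2)) := by nlinarith
          exact mul_le_mul_of_nonneg_right h5 he2.le

lemma exp_smul_transpose (A : Matrix (Fin n) (Fin n) ℝ) (t : ℝ) :
    exp (t • Aᵀ) = (exp (t • A))ᵀ := by
  rw [← Matrix.transpose_smul, Matrix.exp_transpose]

lemma continuous_exp_smul (A : Matrix (Fin n) (Fin n) ℝ) :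
    Continuous (fun t : ℝ => exp (t • A)) :=
  exp_continuous.comp (continuous_id.smul continuous_const)

lemma continuous_sandwich (A Q : Matrix (Fin n) (Fin n) ℝ) :
    Continuous (fun t : ℝ => exp (t • Aᵀ) * Q * exp (t • A)) :=
  (((continuous_exp_smul Aᵀ).mul continuous_const).mul (continuous_exp_smul A))

lemma norm_sandwich_le (A Q : Matrix (Fin n) (Fin n) ℝ) (t : ℝ) :
    ‖exp (t • Aᵀ) * Q * exp (t • A)‖ ≤ ‖exp (t • A)‖ * ‖Q‖ * ‖exp (t • A)‖ := by
  have h1 : ‖exp (t • Aᵀ)‖ = ‖exp (t • A)‖ := by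
    rw [exp_smul_transpose, Matrix.frobenius_norm_transpose]
  calc ‖exp (t • Aᵀ) * Q * exp (t • A)‖
      ≤ ‖exp (t • Aᵀ) * Q‖ * ‖exp (t • A)‖ := norm_mul_le _ _
    _ ≤ ‖exp (t • Aᵀ)‖ * ‖Q‖ * ‖exp (t • A)‖ :=
        mul_le_mul_of_nonneg_right (norm_mul_le _ _) (norm_nonneg _)
    _ = ‖exp (t • A)‖ * ‖Q‖ * ‖exp (t • A)‖ := by rw [h1]

lemma integrableOn_sandwich (A : Matrix (Fin n) (Fin n) ℝ) (hA : IsHurwitz A)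
    (Q : Matrix (Fin n) (Fin n) ℝ) :
    IntegrableOn (fun t : ℝ => exp (t • Aᵀ) * Q * exp (t • A)) (Set.Ioi 0) := by
  obtain ⟨C, hC, ε, hε, hbound⟩ := norm_exp_decay A hA
  refine Integrable.mono' (g := fun t : ℝ => (C * ‖Q‖ * C) * Real.exp (-(2*ε) * t))
    (((exp_neg_integrableOn_Ioi 0 (by positivity : (0:ℝ) < 2*ε))).const_mul _)
    ((continuous_sandwich A Q).aestronglyMeasurable.restrict) ?_
  rw [MeasureTheory.ae_restrict_iff' measurableSet_Ioi]
  filter_upwards with t ht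
  have ht' : (0:ℝ) ≤ t := le_of_lt ht
  have h2 := hbound t ht'
  have h3 : (0:ℝ) ≤ ‖Q‖ := norm_nonneg _
  have h4 : (0:ℝ) ≤ ‖exp (t • A)‖ := norm_nonneg _
  have h5 : (0:ℝ) < Real.exp (-(ε * t)) := Real.exp_pos _
  calc ‖exp (t • Aᵀ) * Q * exp (t • A)‖
      ≤ ‖exp (t • A)‖ * ‖Q‖ * ‖exp (t • A)‖ := norm_sandwich_le A Q t
    _ ≤ (C * Real.exp (-(ε * t))) * ‖Q‖ * (C * Real.exp (-(ε * t))) := by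
        apply mul_le_mul (mul_le_mul_of_nonneg_right h2 h3) h2 h4
        positivity
    _ = (C * ‖Q‖ * C) * (Real.exp (-(ε * t)) * Real.exp (-(ε * t))) := by ring
    _ = (C * ‖Q‖ * C) * Real.exp (-(2*ε) * t) := by
        rw [← Real.exp_add]; ring_nf

lemma posSemidef_smul {N : Matrix (Fin n) (Fin n) ℝ} (h : N.PosSemidef) {a : ℝ}
    (ha : 0 ≤ a) : (a • N).PosSemidef := by
  constructor
  · show (a • N)ᴴ = a • N
    rw [Matrix.conjTranspose_smul, h.1.eq, star_trivial]
  · exact (h.smul ha).2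

noncomputable def ctransposeL : Matrix (Fin n) (Fin n) ℝ →ₗ[ℝ] Matrix (Fin n) (Fin n) ℝ where
  toFun := fun M => Mᴴ
  map_add' := fun M N => Matrix.conjTranspose_add M N
  map_smul' := fun c M => by
    simp [Matrix.conjTranspose_smul]

noncomputable def quadL (x : Fin n → ℝ) : Matrix (Fin n) (Fin n) ℝ →ₗ[ℝ] ℝ where
  toFun := fun M => dotProduct (star x) (M.mulVec x)
  map_add' := fun M N => by
    show star x ⬝ᵥ (M + N) *ᵥ x = _
    rw [Matrix.add_mulVec, dotProduct_add]
  map_smul' := fun c M => by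
    show star x ⬝ᵥ (c • M) *ᵥ x = _
    rw [Matrix.smul_mulVec, dotProduct_smul]; rfl

lemma posSemidef_integral {f : ℝ → Matrix (Fin n) (Fin n) ℝ}
    (hf : IntegrableOn f (Set.Ioi 0))
    (hpos : ∀ t ∈ Set.Ioi (0:ℝ), (f t).PosSemidef) :
    (∫ t in Set.Ioi (0:ℝ), f t).PosSemidef := by
  have hct : Continuous (ctransposeL (n := n)) := ctransposeL.continuous_of_finiteDimensional
  rw [Matrix.posSemidef_iff_dotProduct_mulVec]
  constructor
  · show (∫ t in Set.Ioi (0:ℝ), f t)ᴴ = _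
    have h1 : (∫ t in Set.Ioi (0:ℝ), f t)ᴴ
        = ∫ t in Set.Ioi (0:ℝ), (f t)ᴴ := by
      exact (ContinuousLinearMap.integral_comp_comm ⟨ctransposeL, hct⟩ hf).symm
    rw [h1]
    apply MeasureTheory.setIntegral_congr_fun measurableSet_Ioi
    intro t ht
    exact (hpos t ht).1
  · intro x
    have hq : Continuous (quadL (n := n) x) := (quadL x).continuous_of_finiteDimensional
    have h1 : dotProduct (star x) ((∫ t in Set.Ioi (0:ℝ), f t).mulVec x)
        = ∫ t in Set.Ioi (0:ℝ), dotProduct (star x) ((f t).mulVec x) := by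
      exact (ContinuousLinearMap.integral_comp_comm ⟨quadL x, hq⟩ hf).symm
    rw [h1]
    apply MeasureTheory.setIntegral_nonneg measurableSet_Ioi
    intro t ht
    exact (Matrix.posSemidef_iff_dotProduct_mulVec.mp (hpos t ht)).2 x

lemma hasDerivAt_sandwichP (A P : Matrix (Fin n) (Fin n) ℝ) (t : ℝ) :
    HasDerivAt (fun t : ℝ => exp (t • Aᵀ) * P * exp (t • A))
      (exp (t • Aᵀ) * (Aᵀ * P + P * A) * exp (t • A)) t := by
  have h1 : HasDerivAt (fun t : ℝ => exp (t • Aᵀ)) (exp (t • Aᵀ) * Aᵀ) t :=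
    hasDerivAt_exp_smul_const Aᵀ t
  have h2 : HasDerivAt (fun t : ℝ => exp (t • A)) (A * exp (t • A)) t :=
    hasDerivAt_exp_smul_const' A t
  have h3 := (h1.mul_const P).mul h2
  refine h3.congr_deriv ?_
  noncomm_ring

lemma integral_sandwich_eq (A M P : Matrix (Fin n) (Fin n) ℝ) (hA : IsHurwitz A)
    (hLyap : Aᵀ * P + P * A + M = 0) :
    (∫ t in Set.Ioi (0:ℝ), exp (t • Aᵀ) * M * exp (t • A)) = P := by
  set G := fun t : ℝ => exp (t • Aᵀ) * M * exp (t • A) with hGdef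
  set F := fun t : ℝ => exp (t • Aᵀ) * P * exp (t • A) with hFdef
  have hMeq : Aᵀ * P + P * A = -M := by
    have := hLyap
    rw [add_eq_zero_iff_eq_neg] at this
    exact this
  have hderiv : ∀ t : ℝ, HasDerivAt F (-G t) t := by
    intro t
    have := hasDerivAt_sandwichP A P t
    rw [hMeq] at this
    simpa only [hGdef, mul_neg, neg_mul] using this
  have hInt : ∀ T : ℝ, IntervalIntegrable G MeasureTheory.volume 0 T := fun T =>
    (continuous_sandwich A M).intervalIntegrable 0 T
  have hF0 : F 0 = P := by
    simp [hFdef, zero_smul, NormedSpace.exp_zero]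
  have key : ∀ T : ℝ, (∫ t in (0:ℝ)..T, G t) = P - F T := by
    intro T
    have h := intervalIntegral.integral_eq_sub_of_hasDerivAt
      (f := F) (f' := fun t => -G t) (fun t _ => hderiv t) ((hInt T).neg)
    rw [intervalIntegral.integral_neg, hF0] at h
    have := neg_eq_iff_eq_neg.mp h
    rw [this]
    abel
  have hFlim : Tendsto F atTop (𝓝 0) := by
    obtain ⟨C, hC, ε, hε, hb⟩ := norm_exp_decay A hA
    have hg : Tendsto (fun T : ℝ => (C * ‖P‖ * C) * Real.exp (-(2*ε) * T)) atTop (𝓝 0) := by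
      have h1 : Tendsto (fun T : ℝ => -(2*ε) * T) atTop atBot :=
        Tendsto.const_mul_atTop_of_neg (by linarith) tendsto_id
      have h2 := (Real.tendsto_exp_atBot.comp h1).const_mul (C * ‖P‖ * C)
      rw [mul_zero] at h2
      exact h2
    apply squeeze_zero_norm' _ hg
    filter_upwards [eventually_ge_atTop (0:ℝ)] with T hT
    have h2 := hb T hT
    have h3 : (0:ℝ) ≤ ‖P‖ := norm_nonneg _
    have h4 : (0:ℝ) ≤ ‖exp (T • A)‖ := norm_nonneg _
    calc ‖F T‖ ≤ ‖exp (T • A)‖ * ‖P‖ * ‖exp (T • A)‖ := norm_sandwich_le A P T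
      _ ≤ (C * Real.exp (-(ε * T))) * ‖P‖ * (C * Real.exp (-(ε * T))) := by
          apply mul_le_mul (mul_le_mul_of_nonneg_right h2 h3) h2 h4
          positivity
      _ = (C * ‖P‖ * C) * (Real.exp (-(ε * T)) * Real.exp (-(ε * T))) := by ring
      _ = (C * ‖P‖ * C) * Real.exp (-(2*ε) * T) := by
          rw [← Real.exp_add]; ring_nf
  have h2 : Tendsto (fun T : ℝ => ∫ t in (0:ℝ)..T, G t) atTop (𝓝 P) := by
    rw [funext key]
    have h3 := Filter.Tendsto.sub (tendsto_const_nhds (x := P)) hFlim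
    rw [sub_zero] at h3
    exact h3
  have h3 := MeasureTheory.intervalIntegral_tendsto_integral_Ioi 0
    (integrableOn_sandwich A hA M) tendsto_id
  exact tendsto_nhds_unique h3 h2

end HurwitzAux

end Aux

open NormedSpace Filter
open scoped NNReal ENNReal Topology


/-- If `A` is Hurwitz, `c > 0`, `M ⪰ c·I` is symmetric, and the
symmetric matrix `P` solves `AᵀP + PA + M = 0`, then `∫₀^∞ exp(tAᵀ)exp(tA) dt`
converges and is bounded above (in the Loewner order) by `c⁻¹·P`. -/
theorem integral_expT_exp_le_inv_smul_lyapunov {n : ℕ}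
    (A M P : Matrix (Fin n) (Fin n) ℝ)
    (hA : IsHurwitz A) (c : ℝ) (hc : 0 < c) (hM : M.IsHermitian)
    (hMc : (M - c • (1 : Matrix (Fin n) (Fin n) ℝ)).PosSemidef)
    (hP : P.IsHermitian)
    (hLyap : Aᵀ * P + P * A + M = 0) :
    @IntegrableOn _ _ _ _ SeminormedAddGroup.toContinuousENorm
        (fun t : ℝ => NormedSpace.exp (t • Aᵀ) * NormedSpace.exp (t • A))
        (Set.Ioi 0) volume ∧
      (c⁻¹ • P -
          ∫ t in Set.Ioi (0 : ℝ),
            NormedSpace.exp (t • Aᵀ) * NormedSpace.exp (t • A)).PosSemidef := by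
  letI := matENormedAddCommMonoid (n := n)
  letI := matPseudoMetrizableSpace (n := n)
  open HurwitzAux in
  have hE : IntegrableOn
      (fun t : ℝ => exp (t • Aᵀ) * exp (t • A)) (Set.Ioi 0) := by
    have := integrableOn_sandwich A hA 1
    simpa only [mul_one] using this
  refine ⟨hE, ?_⟩
  have hGint := HurwitzAux.integrableOn_sandwich A hA M
  have hGP := HurwitzAux.integral_sandwich_eq A M P hA hLyap
  have hpt : ∀ t : ℝ, c⁻¹ • (exp (t • Aᵀ) * (M - c • 1) * exp (t • A))
      = c⁻¹ • (exp (t • Aᵀ) * M * exp (t • A)) - exp (t • Aᵀ) * exp (t • A) := by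
    intro t
    have hexp : exp (t • Aᵀ) * (M - c • 1) * exp (t • A)
        = exp (t • Aᵀ) * M * exp (t • A)
          - c • (exp (t • Aᵀ) * exp (t • A)) := by
      rw [Matrix.mul_sub, Matrix.sub_mul]
      congr 1
      rw [Matrix.mul_smul, Matrix.smul_mul, mul_one]
    rw [hexp, smul_sub, smul_smul, inv_mul_cancel₀ hc.ne', one_smul]
  have key : c⁻¹ • P - (∫ t in Set.Ioi (0:ℝ), exp (t • Aᵀ) * exp (t • A))
      = ∫ t in Set.Ioi (0:ℝ),
          c⁻¹ • (exp (t • Aᵀ) * (M - c • 1) * exp (t • A)) := by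
    rw [funext hpt]
    have h1 : IntegrableOn
        (fun t : ℝ => c⁻¹ • (exp (t • Aᵀ) * M * exp (t • A))) (Set.Ioi 0) :=
      hGint.smul c⁻¹
    rw [MeasureTheory.integral_sub h1 hE, MeasureTheory.integral_smul, hGP]
  rw [key]
  have hInt2 : IntegrableOn
      (fun t : ℝ => c⁻¹ • (exp (t • Aᵀ) * (M - c • 1) * exp (t • A))) (Set.Ioi 0) :=
    (HurwitzAux.integrableOn_sandwich A hA (M - c • 1)).smul c⁻¹
  apply HurwitzAux.posSemidef_integral hInt2
  intro t ht
  apply HurwitzAux.posSemidef_smul _ (inv_nonneg.mpr hc.le)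
  have h1 := hMc.conjTranspose_mul_mul_same (exp (t • A))
  have h2 : (exp (t • A))ᴴ = exp (t • Aᵀ) := by
    rw [Matrix.conjTranspose_eq_transpose_of_trivial, ← HurwitzAux.exp_smul_transpose]
  rw [h2] at h1
  exact h1
end

section
/- Let A ∈ ℝ^{n×n}, B ∈ ℝ^{n×m}, K ∈ ℝ^{m×n} with A − BK Hurwitz, let Q ∈ ℝ^{n×n}, R ∈ ℝ^{m×m} be symmetric positive definite, and let P be the symmetric positive semidefinite matrix satisfying (A − BK)ᵀP + P(A − BK) + Q + KᵀRK = 0. Let h > 0 be such that Tr(P) ≤ h. Then for all t ≥ 0, ‖exp(t(A − BK))‖ ≤ μ(h)·exp(−γ(h)·t), where γ(h) = λ_min(Q)/(2h), μ(h) = √( 4h·(‖A‖ + ‖B‖·(a₁h + a₂√h)) / λ_min(Q) ), a₁ = 2‖B‖/λ_min(R), and a₂ = √(2‖A‖/λ_min(R)). -/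
open Matrix

namespace CLD

open scoped InnerProductSpace

variable {p q r : ℕ}

lemma euclid_inner_eq (x y : EuclideanSpace ℝ (Fin p)) : ⟪x, y⟫_ℝ = ∑ i, x i * y i := by
  simp [PiLp.inner_apply, RCLike.inner_apply, mul_comm]

lemma tel_apply (A : Matrix (Fin p) (Fin q) ℝ) (x : EuclideanSpace ℝ (Fin q)) (i : Fin p) :
    Matrix.toEuclideanLin A x i = (A *ᵥ (x : Fin q → ℝ)) i := rfl

lemma inner_tel_left (A : Matrix (Fin p) (Fin q) ℝ) (x : EuclideanSpace ℝ (Fin q))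
    (y : EuclideanSpace ℝ (Fin p)) :
    ⟪Matrix.toEuclideanLin A x, y⟫_ℝ = ⟪x, Matrix.toEuclideanLin Aᵀ y⟫_ℝ := by
  simp only [euclid_inner_eq, tel_apply, Matrix.mulVec, dotProduct,
    Finset.sum_mul, Finset.mul_sum, Matrix.transpose_apply]
  rw [Finset.sum_comm]
  apply Finset.sum_congr rfl
  intro i _
  apply Finset.sum_congr rfl
  intro j _
  ring

lemma tel_mul (A : Matrix (Fin p) (Fin q) ℝ) (B : Matrix (Fin q) (Fin r) ℝ)
    (x : EuclideanSpace ℝ (Fin r)) :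
    Matrix.toEuclideanLin (A * B) x = Matrix.toEuclideanLin A (Matrix.toEuclideanLin B x) := by
  apply PiLp.ext
  intro i
  rw [tel_apply, tel_apply, ← Matrix.mulVec_mulVec]
  rfl

lemma norm_tel_le (A : Matrix (Fin p) (Fin q) ℝ) (x : EuclideanSpace ℝ (Fin q)) :
    ‖Matrix.toEuclideanLin A x‖ ≤ matSpectralNorm A * ‖x‖ := by
  simpa [matSpectralNorm] using (LinearMap.toContinuousLinearMap (Matrix.toEuclideanLin A)).le_opNorm x

lemma spectralNorm_nonneg (A : Matrix (Fin p) (Fin q) ℝ) : 0 ≤ matSpectralNorm A :=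
  norm_nonneg _

lemma spectralNorm_le_bound (A : Matrix (Fin p) (Fin q) ℝ) {c : ℝ} (hc : 0 ≤ c)
    (hb : ∀ x : EuclideanSpace ℝ (Fin q), ‖Matrix.toEuclideanLin A x‖ ≤ c * ‖x‖) :
    matSpectralNorm A ≤ c := by
  apply ContinuousLinearMap.opNorm_le_bound _ hc
  intro x
  simpa using hb x

end CLD

namespace Herm

open scoped InnerProductSpace
variable {p : ℕ} {A : Matrix (Fin p) (Fin p) ℝ} (hA : A.IsHermitian)

lemma tel_eigenvectorBasis (i : Fin p) :
    Matrix.toEuclideanLin A (hA.eigenvectorBasis i) =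
      hA.eigenvalues i • hA.eigenvectorBasis i := by
  apply PiLp.ext
  intro j
  have := congrFun (hA.mulVec_eigenvectorBasis i) j
  simpa [CLD.tel_apply] using this

lemma repr_tel (x : EuclideanSpace ℝ (Fin p)) (i : Fin p) :
    hA.eigenvectorBasis.repr (Matrix.toEuclideanLin A x) i =
      hA.eigenvalues i * hA.eigenvectorBasis.repr x i := by
  rw [OrthonormalBasis.repr_apply_apply, OrthonormalBasis.repr_apply_apply]
  have hsymm := (Matrix.isHermitian_iff_isSymmetric).1 hA
  rw [← hsymm (hA.eigenvectorBasis i) x, tel_eigenvectorBasis hA i, real_inner_smul_left]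

lemma inner_tel_self (x : EuclideanSpace ℝ (Fin p)) :
    ⟪x, Matrix.toEuclideanLin A x⟫_ℝ =
      ∑ i, hA.eigenvalues i * (hA.eigenvectorBasis.repr x i)^2 := by
  rw [← hA.eigenvectorBasis.repr.inner_map_map x (Matrix.toEuclideanLin A x),
    CLD.euclid_inner_eq]
  apply Finset.sum_congr rfl
  intro i _
  rw [repr_tel hA x i]
  ring

lemma norm_sq_eq (x : EuclideanSpace ℝ (Fin p)) :
    ‖x‖^2 = ∑ i, (hA.eigenvectorBasis.repr x i)^2 := by
  rw [← real_inner_self_eq_norm_sq, ← hA.eigenvectorBasis.repr.inner_map_map x x,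
    CLD.euclid_inner_eq]
  apply Finset.sum_congr rfl
  intro i _
  ring

lemma trace_eq : A.trace = ∑ i, hA.eigenvalues i := by
  rw [hA.trace_eq_sum_eigenvalues]
  simp

lemma lamMin_le (i : Fin p) : lamMin hA ≤ hA.eigenvalues i :=
  ciInf_le (Finite.bddBelow_range _) i

lemma lamMin_mul_le_quad (x : EuclideanSpace ℝ (Fin p)) :
    lamMin hA * ‖x‖^2 ≤ ⟪x, Matrix.toEuclideanLin A x⟫_ℝ := by
  rw [inner_tel_self hA, norm_sq_eq hA, Finset.mul_sum]
  apply Finset.sum_le_sum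
  intro i _
  exact mul_le_mul_of_nonneg_right (lamMin_le hA i) (sq_nonneg _)

variable (hnn : ∀ i, 0 ≤ hA.eigenvalues i)

include hA hnn

lemma quad_nonneg (x : EuclideanSpace ℝ (Fin p)) :
    0 ≤ ⟪x, Matrix.toEuclideanLin A x⟫_ℝ := by
  rw [inner_tel_self hA]
  exact Finset.sum_nonneg fun i _ => mul_nonneg (hnn i) (sq_nonneg _)

lemma quad_le_trace (x : EuclideanSpace ℝ (Fin p)) :
    ⟪x, Matrix.toEuclideanLin A x⟫_ℝ ≤ A.trace * ‖x‖^2 := by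
  rw [inner_tel_self hA, trace_eq hA, norm_sq_eq hA, Finset.sum_mul]
  apply Finset.sum_le_sum
  intro i _
  apply mul_le_mul_of_nonneg_left _ (hnn i)
  exact Finset.single_le_sum (f := fun j => (hA.eigenvectorBasis.repr x j)^2) (fun j _ => sq_nonneg _) (Finset.mem_univ i)

lemma norm_tel_le_trace (x : EuclideanSpace ℝ (Fin p)) :
    ‖Matrix.toEuclideanLin A x‖ ≤ A.trace * ‖x‖ := by
  have htr : 0 ≤ A.trace := by
    rw [trace_eq hA]; exact Finset.sum_nonneg fun i _ => hnn i
  have hsq : ‖Matrix.toEuclideanLin A x‖^2 ≤ (A.trace * ‖x‖)^2 := by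
    rw [norm_sq_eq hA, mul_pow, norm_sq_eq hA x, Finset.mul_sum]
    apply Finset.sum_le_sum
    intro i _
    rw [repr_tel hA x i, mul_pow]
    apply mul_le_mul_of_nonneg_right _ (sq_nonneg _)
    have h1 : hA.eigenvalues i ≤ A.trace := by
      rw [trace_eq hA]
      exact Finset.single_le_sum (fun j _ => hnn j) (Finset.mem_univ i)
    exact pow_le_pow_left₀ (hnn i) h1 2
  nlinarith [norm_nonneg (Matrix.toEuclideanLin A x), mul_nonneg htr (norm_nonneg x)]

end Herm

namespace CLD

lemma spectralNorm_sub_mul {p q : ℕ} (A : Matrix (Fin p) (Fin p) ℝ)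
    (B : Matrix (Fin p) (Fin q) ℝ) (K : Matrix (Fin q) (Fin p) ℝ) :
    matSpectralNorm (A - B * K) ≤ matSpectralNorm A + matSpectralNorm B * matSpectralNorm K := by
  apply spectralNorm_le_bound _ (add_nonneg (spectralNorm_nonneg A) (mul_nonneg (spectralNorm_nonneg B) (spectralNorm_nonneg K)))
  intro x
  have h1 : Matrix.toEuclideanLin (A - B * K) x =
      Matrix.toEuclideanLin A x - Matrix.toEuclideanLin (B * K) x := by
    rw [map_sub]; rfl
  rw [h1]
  calc ‖Matrix.toEuclideanLin A x - Matrix.toEuclideanLin (B * K) x‖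
      ≤ ‖Matrix.toEuclideanLin A x‖ + ‖Matrix.toEuclideanLin (B * K) x‖ := norm_sub_le _ _
    _ ≤ matSpectralNorm A * ‖x‖ + matSpectralNorm B * (matSpectralNorm K * ‖x‖) := by
        apply add_le_add (norm_tel_le A x)
        rw [tel_mul]
        calc ‖Matrix.toEuclideanLin B (Matrix.toEuclideanLin K x)‖
            ≤ matSpectralNorm B * ‖Matrix.toEuclideanLin K x‖ := norm_tel_le B _
          _ ≤ matSpectralNorm B * (matSpectralNorm K * ‖x‖) :=
              mul_le_mul_of_nonneg_left (norm_tel_le K x) (spectralNorm_nonneg B)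
    _ = (matSpectralNorm A + matSpectralNorm B * matSpectralNorm K) * ‖x‖ := by ring

lemma hasDerivAt_state {p : ℕ} (Ac : Matrix (Fin p) (Fin p) ℝ)
    (x0 : EuclideanSpace ℝ (Fin p)) (t : ℝ) :
    HasDerivAt (fun s : ℝ => Matrix.toEuclideanLin (NormedSpace.exp (s • Ac)) x0)
      (Matrix.toEuclideanLin Ac
        (Matrix.toEuclideanLin (NormedSpace.exp (t • Ac)) x0)) t := by
  letI : SeminormedRing (Matrix (Fin p) (Fin p) ℝ) := Matrix.linftyOpSemiNormedRing
  letI : NormedRing (Matrix (Fin p) (Fin p) ℝ) := Matrix.linftyOpNormedRing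
  letI : NormedAlgebra ℝ (Matrix (Fin p) (Fin p) ℝ) := Matrix.linftyOpNormedAlgebra
  have hexp := hasDerivAt_exp_smul_const' (𝕂 := ℝ) Ac t
  let L : Matrix (Fin p) (Fin p) ℝ →ₗ[ℝ] EuclideanSpace ℝ (Fin p) :=
    (LinearMap.applyₗ x0).comp (Matrix.toEuclideanLin.toLinearMap)
  have hL := (LinearMap.toContinuousLinearMap L).hasFDerivAt.comp_hasDerivAt t hexp
  have : (LinearMap.toContinuousLinearMap L) (Ac * NormedSpace.exp (t • Ac)) =
      Matrix.toEuclideanLin Ac (Matrix.toEuclideanLin (NormedSpace.exp (t • Ac)) x0) := by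
    simp [L, tel_mul]
  exact hL.congr_deriv this

end CLD

namespace CLD

lemma tel_one {p : ℕ} (x : EuclideanSpace ℝ (Fin p)) :
    Matrix.toEuclideanLin (1 : Matrix (Fin p) (Fin p) ℝ) x = x := by
  apply PiLp.ext
  intro i
  rw [tel_apply]
  simp [Matrix.one_mulVec]

end CLD

open scoped InnerProductSpace
set_option maxHeartbeats 1000000

/-- Closed-loop transition-matrix decay bound: if `A − BK` is Hurwitz,
`Q, R ≻ 0`, `P ⪰ 0` solves `(A−BK)ᵀP + P(A−BK) + Q + KᵀRK = 0`, and `Tr(P) ≤ h`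
with `h > 0`, then for all `t ≥ 0`, `‖exp(t(A−BK))‖ ≤ μ(h)·exp(−γ(h)t)` where
`γ(h) = λ_min(Q)/(2h)`, `μ(h) = √(4h(‖A‖ + ‖B‖(a₁h + a₂√h))/λ_min(Q))`,
`a₁ = 2‖B‖/λ_min(R)`, `a₂ = √(2‖A‖/λ_min(R))`. -/
theorem closed_loop_transition_decay {n m : ℕ}
    (A : Matrix (Fin n) (Fin n) ℝ) (B : Matrix (Fin n) (Fin m) ℝ)
    (K : Matrix (Fin m) (Fin n) ℝ)
    (Q : Matrix (Fin n) (Fin n) ℝ) (R : Matrix (Fin m) (Fin m) ℝ)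
    (hHurwitz : IsHurwitz (A - B * K)) (hQ : Q.PosDef) (hR : R.PosDef)
    (P : Matrix (Fin n) (Fin n) ℝ) (hP : P.PosSemidef)
    (hLyap : (A - B * K)ᵀ * P + P * (A - B * K) + Q + Kᵀ * R * K = 0)
    (h : ℝ) (hh : 0 < h) (hTr : P.trace ≤ h) :
    ∀ t : ℝ, 0 ≤ t →
      matSpectralNorm (NormedSpace.exp (t • (A - B * K))) ≤
        Real.sqrt (4 * h * (matSpectralNorm A +
            matSpectralNorm B * ((2 * matSpectralNorm B / lamMin hR.1) * h +
              Real.sqrt (2 * matSpectralNorm A / lamMin hR.1) * Real.sqrt h)) /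
          lamMin hQ.1) *
        Real.exp (-(lamMin hQ.1 / (2 * h)) * t) := by
  intro t ht
  classical
  rcases Nat.eq_zero_or_pos n with hn | hn
  · subst hn
    haveI : Subsingleton (EuclideanSpace ℝ (Fin 0)) :=
      ⟨fun a b => by apply PiLp.ext; intro i; exact i.elim0⟩
    have hz : (LinearMap.toContinuousLinearMap
        (Matrix.toEuclideanLin (NormedSpace.exp (t • (A - B * K))))) = 0 :=
      ContinuousLinearMap.ext fun x => Subsingleton.elim _ _
    rw [matSpectralNorm, hz, norm_zero]
    exact mul_nonneg (Real.sqrt_nonneg _) (Real.exp_pos _).le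
  haveI : Nonempty (Fin n) := Fin.pos_iff_nonempty.mp hn
  set Ac : Matrix (Fin n) (Fin n) ℝ := A - B * K with hAcdef
  set M : Matrix (Fin n) (Fin n) ℝ := Q + Kᵀ * R * K with hMdef
  -- rearranged Lyapunov equation
  have hLyap2 : Acᵀ * P + P * Ac = -M := by
    have h0 : (Acᵀ * P + P * Ac) + M = 0 := by
      rw [hMdef, ← add_assoc]; exact hLyap
    exact eq_neg_of_add_eq_zero_left h0
  -- eigenvalue facts
  have hQev : ∀ i, 0 ≤ hQ.1.eigenvalues i := fun i => (hQ.eigenvalues_pos i).le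
  have hlamQpos : 0 < lamMin hQ.1 := by
    obtain ⟨i0, hi0⟩ := Finite.exists_min hQ.1.eigenvalues
    have he : lamMin hQ.1 = hQ.1.eigenvalues i0 :=
      le_antisymm (Herm.lamMin_le _ i0) (le_ciInf hi0)
    rw [he]; exact hQ.eigenvalues_pos i0
  have hPev : ∀ i, 0 ≤ hP.1.eigenvalues i := hP.eigenvalues_nonneg
  have htrP0 : 0 ≤ P.trace := by
    rw [Herm.trace_eq hP.1]; exact Finset.sum_nonneg fun i _ => hPev i
  -- key Lyapunov identity on vectors
  have keyid : ∀ y : EuclideanSpace ℝ (Fin n),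
      ⟪y, Matrix.toEuclideanLin P (Matrix.toEuclideanLin Ac y)⟫_ℝ
        + ⟪Matrix.toEuclideanLin Ac y, Matrix.toEuclideanLin P y⟫_ℝ
        = -⟪y, Matrix.toEuclideanLin M y⟫_ℝ := by
    intro y
    have h1 : ⟪Matrix.toEuclideanLin Ac y, Matrix.toEuclideanLin P y⟫_ℝ
        = ⟪y, Matrix.toEuclideanLin (Acᵀ * P) y⟫_ℝ := by
      rw [CLD.inner_tel_left, CLD.tel_mul]
    have h2 : ⟪y, Matrix.toEuclideanLin P (Matrix.toEuclideanLin Ac y)⟫_ℝ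
        = ⟪y, Matrix.toEuclideanLin (P * Ac) y⟫_ℝ := by rw [CLD.tel_mul]
    have h3 : Matrix.toEuclideanLin (P * Ac) y + Matrix.toEuclideanLin (Acᵀ * P) y
        = Matrix.toEuclideanLin (Acᵀ * P + P * Ac) y := by
      rw [map_add]; exact (add_comm _ _)
    have h4 : Matrix.toEuclideanLin (Acᵀ * P + P * Ac) y
        = -(Matrix.toEuclideanLin M y) := by
      rw [hLyap2, map_neg]; rfl
    rw [h1, h2, ← inner_add_right, h3, h4, inner_neg_right]
  -- quadratic form of M decomposition
  have hMident : ∀ y : EuclideanSpace ℝ (Fin n),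
      ⟪y, Matrix.toEuclideanLin M y⟫_ℝ
        = ⟪y, Matrix.toEuclideanLin Q y⟫_ℝ
          + ⟪Matrix.toEuclideanLin K y,
              Matrix.toEuclideanLin R (Matrix.toEuclideanLin K y)⟫_ℝ := by
    intro y
    have h1 : Matrix.toEuclideanLin M y
        = Matrix.toEuclideanLin Q y + Matrix.toEuclideanLin (Kᵀ * R * K) y := by
      rw [hMdef, map_add]; rfl
    rw [h1, inner_add_right]
    congr 1
    rw [CLD.tel_mul (Kᵀ * R) K y, CLD.tel_mul Kᵀ R, ← CLD.inner_tel_left K]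
  have hMlow : ∀ y : EuclideanSpace ℝ (Fin n),
      lamMin hQ.1 * ‖y‖^2 ≤ ⟪y, Matrix.toEuclideanLin M y⟫_ℝ := by
    intro y
    rw [hMident y]
    have h1 := Herm.lamMin_mul_le_quad hQ.1 y
    have h2 := Herm.quad_nonneg hR.1 (hR.posSemidef.eigenvalues_nonneg)
      (Matrix.toEuclideanLin K y)
    linarith
  -- symmetry of P
  have hPt : Pᵀ = P := by
    have := hP.1
    rwa [Matrix.IsHermitian, conjTranspose_eq_transpose_of_trivial] at this
  have hPsym : ∀ y z : EuclideanSpace ℝ (Fin n),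
      ⟪Matrix.toEuclideanLin P y, z⟫_ℝ = ⟪y, Matrix.toEuclideanLin P z⟫_ℝ := by
    intro y z; rw [CLD.inner_tel_left, hPt]
  have hM2 : ∀ y : EuclideanSpace ℝ (Fin n),
      ⟪y, Matrix.toEuclideanLin M y⟫_ℝ
        = -2 * ⟪y, Matrix.toEuclideanLin P (Matrix.toEuclideanLin Ac y)⟫_ℝ := by
    intro y
    have hc : ⟪Matrix.toEuclideanLin Ac y, Matrix.toEuclideanLin P y⟫_ℝ
        = ⟪y, Matrix.toEuclideanLin P (Matrix.toEuclideanLin Ac y)⟫_ℝ := by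
      rw [real_inner_comm, hPsym]
    have := keyid y
    linarith
  have hMhigh : ∀ y : EuclideanSpace ℝ (Fin n),
      ⟪y, Matrix.toEuclideanLin M y⟫_ℝ ≤ 2 * h * matSpectralNorm Ac * ‖y‖^2 := by
    intro y
    rw [hM2 y]
    have h1 : -⟪y, Matrix.toEuclideanLin P (Matrix.toEuclideanLin Ac y)⟫_ℝ
        ≤ ‖y‖ * ‖Matrix.toEuclideanLin P (Matrix.toEuclideanLin Ac y)‖ := by
      have := abs_real_inner_le_norm y (Matrix.toEuclideanLin P (Matrix.toEuclideanLin Ac y))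
      have := neg_abs_le (⟪y, Matrix.toEuclideanLin P (Matrix.toEuclideanLin Ac y)⟫_ℝ)
      linarith
    have h2 : ‖Matrix.toEuclideanLin P (Matrix.toEuclideanLin Ac y)‖
        ≤ P.trace * ‖Matrix.toEuclideanLin Ac y‖ :=
      Herm.norm_tel_le_trace hP.1 hPev _
    have h3 : ‖Matrix.toEuclideanLin Ac y‖ ≤ matSpectralNorm Ac * ‖y‖ := CLD.norm_tel_le Ac y
    have h4 : ‖Matrix.toEuclideanLin P (Matrix.toEuclideanLin Ac y)‖
        ≤ h * (matSpectralNorm Ac * ‖y‖) := by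
      calc ‖Matrix.toEuclideanLin P (Matrix.toEuclideanLin Ac y)‖
          ≤ P.trace * ‖Matrix.toEuclideanLin Ac y‖ := h2
        _ ≤ h * (matSpectralNorm Ac * ‖y‖) := by
            apply mul_le_mul hTr h3 (norm_nonneg _) hh.le
    nlinarith [norm_nonneg y, mul_le_mul_of_nonneg_left h4 (norm_nonneg y)]
  -- bound on the norm of K
  have hkb : matSpectralNorm K ≤ (2 * matSpectralNorm B / lamMin hR.1) * h +
      Real.sqrt (2 * matSpectralNorm A / lamMin hR.1) * Real.sqrt h := by
    rcases Nat.eq_zero_or_pos m with hm | hm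
    · subst hm
      haveI : Subsingleton (EuclideanSpace ℝ (Fin 0)) :=
        ⟨fun a b => by apply PiLp.ext; intro i; exact i.elim0⟩
      have hz : (LinearMap.toContinuousLinearMap (Matrix.toEuclideanLin K)) = 0 :=
        ContinuousLinearMap.ext fun x => Subsingleton.elim _ _
      have hK0 : matSpectralNorm K = 0 := by rw [matSpectralNorm, hz, norm_zero]
      have hlr : lamMin hR.1 = (0 : ℝ) := Real.iInf_of_isEmpty _
      rw [hK0, hlr]
      simp
    · haveI : Nonempty (Fin m) := Fin.pos_iff_nonempty.mp hm
      have hlamRpos : 0 < lamMin hR.1 := by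
        obtain ⟨i0, hi0⟩ := Finite.exists_min hR.1.eigenvalues
        have he : lamMin hR.1 = hR.1.eigenvalues i0 :=
          le_antisymm (Herm.lamMin_le _ i0) (le_ciInf hi0)
        rw [he]; exact hR.eigenvalues_pos i0
      have hKquad : ∀ y : EuclideanSpace ℝ (Fin n),
          lamMin hR.1 * ‖Matrix.toEuclideanLin K y‖^2
            ≤ 2 * h * matSpectralNorm Ac * ‖y‖^2 := by
        intro y
        have h1 := Herm.lamMin_mul_le_quad hR.1 (Matrix.toEuclideanLin K y)
        have h2 : ⟪Matrix.toEuclideanLin K y,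
            Matrix.toEuclideanLin R (Matrix.toEuclideanLin K y)⟫_ℝ
              ≤ ⟪y, Matrix.toEuclideanLin M y⟫_ℝ := by
          rw [hMident y]
          have := Herm.quad_nonneg hQ.1 hQev y
          linarith
        have h3 := hMhigh y
        linarith
      have hcnn : 0 ≤ 2 * h * matSpectralNorm Ac / lamMin hR.1 :=
        div_nonneg (by nlinarith [CLD.spectralNorm_nonneg Ac]) hlamRpos.le
      have hKle : matSpectralNorm K ≤ Real.sqrt (2 * h * matSpectralNorm Ac / lamMin hR.1) := by
        apply CLD.spectralNorm_le_bound _ (Real.sqrt_nonneg _)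
        intro y
        have h1 : ‖Matrix.toEuclideanLin K y‖^2
            ≤ (2 * h * matSpectralNorm Ac / lamMin hR.1) * ‖y‖^2 := by
          rw [div_mul_eq_mul_div, le_div_iff₀ hlamRpos]
          nlinarith [hKquad y]
        have h2 : (Real.sqrt (2 * h * matSpectralNorm Ac / lamMin hR.1) * ‖y‖)^2
            = (2 * h * matSpectralNorm Ac / lamMin hR.1) * ‖y‖^2 := by
          rw [mul_pow, Real.sq_sqrt hcnn]
        nlinarith [norm_nonneg (Matrix.toEuclideanLin K y),
          mul_nonneg (Real.sqrt_nonneg (2 * h * matSpectralNorm Ac / lamMin hR.1)) (norm_nonneg y)]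
      have hksq : lamMin hR.1 * matSpectralNorm K^2 ≤ 2 * h * matSpectralNorm Ac := by
        have h1 : matSpectralNorm K^2 ≤ 2 * h * matSpectralNorm Ac / lamMin hR.1 := by
          have := pow_le_pow_left₀ (CLD.spectralNorm_nonneg K) hKle 2
          rwa [Real.sq_sqrt hcnn] at this
        calc lamMin hR.1 * matSpectralNorm K^2
            ≤ lamMin hR.1 * (2 * h * matSpectralNorm Ac / lamMin hR.1) :=
              mul_le_mul_of_nonneg_left h1 hlamRpos.le
          _ = 2 * h * matSpectralNorm Ac := by
              rw [mul_comm]; exact div_mul_cancel₀ _ (ne_of_gt hlamRpos)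
      have hAcle : matSpectralNorm Ac ≤ matSpectralNorm A + matSpectralNorm B * matSpectralNorm K :=
        CLD.spectralNorm_sub_mul A B K
      have hquadk : matSpectralNorm K^2 ≤ ((2 * matSpectralNorm B / lamMin hR.1) * h) * matSpectralNorm K
          + (2 * matSpectralNorm A / lamMin hR.1) * h := by
        have h2 : matSpectralNorm K^2 * lamMin hR.1
            ≤ 2 * matSpectralNorm B * h * matSpectralNorm K + 2 * matSpectralNorm A * h := by
          nlinarith [hksq, hAcle, hh, CLD.spectralNorm_nonneg K]
        calc matSpectralNorm K^2 = (matSpectralNorm K^2 * lamMin hR.1) / lamMin hR.1 :=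
              (mul_div_cancel_right₀ _ (ne_of_gt hlamRpos)).symm
          _ ≤ (2 * matSpectralNorm B * h * matSpectralNorm K + 2 * matSpectralNorm A * h) / lamMin hR.1 :=
              (div_le_div_iff_of_pos_right hlamRpos).mpr h2
          _ = ((2 * matSpectralNorm B / lamMin hR.1) * h) * matSpectralNorm K
              + (2 * matSpectralNorm A / lamMin hR.1) * h := by ring
      set b' : ℝ := (2 * matSpectralNorm B / lamMin hR.1) * h with hb'def
      set c' : ℝ := (2 * matSpectralNorm A / lamMin hR.1) * h with hc'def
      have hb' : 0 ≤ b' :=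
        mul_nonneg (div_nonneg (by nlinarith [CLD.spectralNorm_nonneg B]) hlamRpos.le) hh.le
      have hc' : 0 ≤ c' :=
        mul_nonneg (div_nonneg (by nlinarith [CLD.spectralNorm_nonneg A]) hlamRpos.le) hh.le
      have hsqc : Real.sqrt (2 * matSpectralNorm A / lamMin hR.1) * Real.sqrt h
          = Real.sqrt c' := by
        rw [hc'def, Real.sqrt_mul (div_nonneg (by nlinarith [CLD.spectralNorm_nonneg A]) hlamRpos.le)]
      rw [hsqc]
      by_cases hk1 : matSpectralNorm K ≤ b'
      · have := Real.sqrt_nonneg c'; linarith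
      · push_neg at hk1
        have h5 : (matSpectralNorm K - b')^2 ≤ c' := by nlinarith [hquadk, hb']
        have h6 := (Real.le_sqrt (by linarith : (0:ℝ) ≤ matSpectralNorm K - b') hc').mpr h5
        linarith
  -- smallest eigenvalue of P
  obtain ⟨iP, hiP⟩ := Finite.exists_min hP.1.eigenvalues
  set lam : ℝ := hP.1.eigenvalues iP with hlamdef
  have hlamEq : lamMin hP.1 = lam :=
    le_antisymm (Herm.lamMin_le _ iP) (le_ciInf hiP)
  have hlam0 : 0 ≤ lam := hPev iP
  set vP : EuclideanSpace ℝ (Fin n) := hP.1.eigenvectorBasis iP with hvPdef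
  have hvP1 : ‖vP‖ = 1 := hP.1.eigenvectorBasis.orthonormal.1 iP
  have htelvP : Matrix.toEuclideanLin P vP = lam • vP := Herm.tel_eigenvectorBasis hP.1 iP
  have hQlam : lamMin hQ.1 ≤ 2 * lam * matSpectralNorm Ac := by
    have h1 := hMlow vP
    rw [hvP1] at h1
    have h2 := keyid vP
    have hc : ⟪Matrix.toEuclideanLin Ac vP, Matrix.toEuclideanLin P vP⟫_ℝ
        = ⟪vP, Matrix.toEuclideanLin P (Matrix.toEuclideanLin Ac vP)⟫_ℝ := by
      rw [real_inner_comm, hPsym]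
    have h3 : ⟪Matrix.toEuclideanLin Ac vP, Matrix.toEuclideanLin P vP⟫_ℝ
        = lam * ⟪Matrix.toEuclideanLin Ac vP, vP⟫_ℝ := by
      rw [htelvP, real_inner_smul_right]
    have h4 : -⟪Matrix.toEuclideanLin Ac vP, vP⟫_ℝ
        ≤ ‖Matrix.toEuclideanLin Ac vP‖ * ‖vP‖ := by
      have ha := abs_real_inner_le_norm (Matrix.toEuclideanLin Ac vP) vP
      have hb := neg_abs_le (⟪Matrix.toEuclideanLin Ac vP, vP⟫_ℝ)
      linarith
    have h5 : ‖Matrix.toEuclideanLin Ac vP‖ ≤ matSpectralNorm Ac := by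
      have := CLD.norm_tel_le Ac vP
      rw [hvP1, mul_one] at this
      exact this
    rw [hvP1, mul_one] at h4
    -- λQ ≤ ⟪vP, M vP⟫ = -(2 lam ⟪Ac vP, vP⟫) ≤ 2 lam ‖Ac‖
    nlinarith [mul_le_mul_of_nonneg_left (le_trans h4 h5) hlam0]
  have hlampos : 0 < lam := by
    rcases lt_or_ge 0 lam with hl | hl
    · exact hl
    · exfalso
      have : 2 * lam * matSpectralNorm Ac ≤ 0 := by
        have := CLD.spectralNorm_nonneg Ac
        nlinarith
      linarith
  -- the big constant
  set SL : ℝ := matSpectralNorm A + matSpectralNorm B * ((2 * matSpectralNorm B / lamMin hR.1) * h +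
      Real.sqrt (2 * matSpectralNorm A / lamMin hR.1) * Real.sqrt h) with hSLdef
  have hAcSL : matSpectralNorm Ac ≤ SL := by
    calc matSpectralNorm Ac ≤ matSpectralNorm A + matSpectralNorm B * matSpectralNorm K :=
          CLD.spectralNorm_sub_mul A B K
      _ ≤ SL := by
          rw [hSLdef]
          have := mul_le_mul_of_nonneg_left hkb (CLD.spectralNorm_nonneg B)
          linarith
  have hSL0 : 0 ≤ SL := le_trans (CLD.spectralNorm_nonneg Ac) hAcSL
  -- start of the Gronwall argument
  apply CLD.spectralNorm_le_bound _
    (mul_nonneg (Real.sqrt_nonneg _) (Real.exp_pos _).le)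
  intro x0
  set γ : ℝ := lamMin hQ.1 / (2 * h) with hγdef
  have hγ0 : 0 ≤ γ := div_nonneg hlamQpos.le (by linarith)
  have hγh : 2 * γ * h = lamMin hQ.1 := by
    rw [hγdef]; field_simp
  set xf : ℝ → EuclideanSpace ℝ (Fin n) :=
    fun s => Matrix.toEuclideanLin (NormedSpace.exp (s • Ac)) x0 with hxfdef
  set vf : ℝ → ℝ := fun s => ⟪xf s, Matrix.toEuclideanLin P (xf s)⟫_ℝ with hvfdef
  have hx : ∀ s : ℝ, HasDerivAt xf (Matrix.toEuclideanLin Ac (xf s)) s :=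
    fun s => CLD.hasDerivAt_state Ac x0 s
  have hxP : ∀ s : ℝ, HasDerivAt (fun u => Matrix.toEuclideanLin P (xf u))
      (Matrix.toEuclideanLin P (Matrix.toEuclideanLin Ac (xf s))) s := by
    intro s
    have h1 := (LinearMap.toContinuousLinearMap
      (Matrix.toEuclideanLin P)).hasFDerivAt.comp_hasDerivAt s (hx s)
    exact h1
  have hv : ∀ s : ℝ, HasDerivAt vf (-⟪xf s, Matrix.toEuclideanLin M (xf s)⟫_ℝ) s := by
    intro s
    have h1 := HasDerivAt.inner ℝ (hx s) (hxP s)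
    rw [keyid (xf s)] at h1
    exact h1
  set gf : ℝ → ℝ := fun s => vf s * Real.exp (2 * γ * s) with hgfdef
  have hg : ∀ s : ℝ, HasDerivAt gf
      ((-⟪xf s, Matrix.toEuclideanLin M (xf s)⟫_ℝ) * Real.exp (2 * γ * s)
        + vf s * (Real.exp (2 * γ * s) * (2 * γ))) s := by
    intro s
    have h0 : HasDerivAt (fun u : ℝ => 2 * γ * u) (2 * γ) s := by
      simpa using (hasDerivAt_id s).const_mul (2 * γ)
    have he : HasDerivAt (fun u : ℝ => Real.exp (2 * γ * u))
        (Real.exp (2 * γ * s) * (2 * γ)) s :=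
      (Real.hasDerivAt_exp (2 * γ * s)).comp s h0
    exact (hv s).mul he
  have hgder : ∀ s : ℝ, deriv gf s ≤ 0 := by
    intro s
    rw [(hg s).deriv]
    have hb1 : lamMin hQ.1 * ‖xf s‖^2 ≤ ⟪xf s, Matrix.toEuclideanLin M (xf s)⟫_ℝ := hMlow (xf s)
    have hb2 : vf s ≤ h * ‖xf s‖^2 := by
      have h1 := Herm.quad_le_trace hP.1 hPev (xf s)
      have h2 : P.trace * ‖xf s‖^2 ≤ h * ‖xf s‖^2 :=
        mul_le_mul_of_nonneg_right hTr (sq_nonneg _)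
      exact le_trans h1 h2
    have hexp0 : (0:ℝ) < Real.exp (2 * γ * s) := Real.exp_pos _
    have hbound : vf s * (2 * γ) ≤ lamMin hQ.1 * ‖xf s‖^2 := by
      calc vf s * (2 * γ) ≤ (h * ‖xf s‖^2) * (2 * γ) :=
            mul_le_mul_of_nonneg_right hb2 (by linarith)
        _ = (2 * γ * h) * ‖xf s‖^2 := by ring
        _ = lamMin hQ.1 * ‖xf s‖^2 := by rw [hγh]
    have hkey : 0 ≤ ⟪xf s, Matrix.toEuclideanLin M (xf s)⟫_ℝ - vf s * (2 * γ) := by linarith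
    nlinarith [mul_nonneg hexp0.le hkey]
  have hmono : Antitone gf :=
    antitone_of_deriv_nonpos (fun s => (hg s).differentiableAt) hgder
  have hx0 : xf 0 = x0 := by
    rw [hxfdef]
    simp only [zero_smul, NormedSpace.exp_zero]
    exact CLD.tel_one x0
  have hv0 : vf 0 ≤ h * ‖x0‖^2 := by
    have h1 := Herm.quad_le_trace hP.1 hPev x0
    have h2 : P.trace * ‖x0‖^2 ≤ h * ‖x0‖^2 :=
      mul_le_mul_of_nonneg_right hTr (sq_nonneg _)
    calc vf 0 = ⟪x0, Matrix.toEuclideanLin P x0⟫_ℝ := by rw [hvfdef]; simp [hx0]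
      _ ≤ h * ‖x0‖^2 := le_trans h1 h2
  have hgt : vf t * Real.exp (2 * γ * t) ≤ h * ‖x0‖^2 := by
    have h1 : gf t ≤ gf 0 := hmono ht
    have h2 : gf 0 = vf 0 := by rw [hgfdef]; simp
    calc vf t * Real.exp (2 * γ * t) = gf t := rfl
      _ ≤ gf 0 := h1
      _ = vf 0 := h2
      _ ≤ h * ‖x0‖^2 := hv0
  have hvt : vf t ≤ h * ‖x0‖^2 * Real.exp (-(2 * γ) * t) := by
    rw [show -(2 * γ) * t = -(2 * γ * t) by ring, Real.exp_neg, mul_comm (h * ‖x0‖^2) _,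
      ← div_eq_inv_mul, le_div_iff₀ (Real.exp_pos _)]
    exact hgt
  have hlx : lam * ‖xf t‖^2 ≤ vf t := by
    have := Herm.lamMin_mul_le_quad hP.1 (xf t)
    rw [hlamEq] at this
    exact this
  -- compare the constants
  have hcmp : lamMin hQ.1 ≤ 4 * lam * SL := by
    have h1 : lam * matSpectralNorm Ac ≤ lam * SL :=
      mul_le_mul_of_nonneg_left hAcSL hlam0
    nlinarith [mul_nonneg hlam0 hSL0]
  have hdivle : h / lam ≤ 4 * h * SL / lamMin hQ.1 := by
    rw [div_le_div_iff₀ hlampos hlamQpos]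
    nlinarith [hcmp, hh]
  have hconnn : 0 ≤ 4 * h * SL / lamMin hQ.1 :=
    le_trans (div_nonneg hh.le hlam0) hdivle
  -- square of the final bound
  have hexp2 : (Real.exp (-γ * t))^2 = Real.exp (-(2 * γ) * t) := by
    rw [sq, ← Real.exp_add]
    congr 1
    ring
  have hfin_sq : ‖xf t‖^2
      ≤ (Real.sqrt (4 * h * SL / lamMin hQ.1) * Real.exp (-γ * t) * ‖x0‖)^2 := by
    have hrhs : (Real.sqrt (4 * h * SL / lamMin hQ.1) * Real.exp (-γ * t) * ‖x0‖)^2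
        = (4 * h * SL / lamMin hQ.1) * (Real.exp (-(2 * γ) * t) * ‖x0‖^2) := by
      rw [mul_pow, mul_pow, Real.sq_sqrt hconnn, hexp2]
      ring
    rw [hrhs]
    have h1 : ‖xf t‖^2 ≤ (h / lam) * (Real.exp (-(2 * γ) * t) * ‖x0‖^2) := by
      have h2 : lam * ‖xf t‖^2 ≤ h * ‖x0‖^2 * Real.exp (-(2 * γ) * t) :=
        le_trans hlx hvt
      rw [div_mul_eq_mul_div, le_div_iff₀ hlampos]
      nlinarith [h2]
    have h3 : (h / lam) * (Real.exp (-(2 * γ) * t) * ‖x0‖^2)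
        ≤ (4 * h * SL / lamMin hQ.1) * (Real.exp (-(2 * γ) * t) * ‖x0‖^2) :=
      mul_le_mul_of_nonneg_right hdivle
        (mul_nonneg (Real.exp_pos _).le (sq_nonneg _))
    linarith
  have hfinal : ‖xf t‖ ≤ Real.sqrt (4 * h * SL / lamMin hQ.1) * Real.exp (-γ * t) * ‖x0‖ := by
    have h0 : 0 ≤ Real.sqrt (4 * h * SL / lamMin hQ.1) * Real.exp (-γ * t) * ‖x0‖ :=
      mul_nonneg (mul_nonneg (Real.sqrt_nonneg _) (Real.exp_pos _).le) (norm_nonneg _)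
    nlinarith [norm_nonneg (xf t), hfin_sq]
  -- conclude
  calc ‖Matrix.toEuclideanLin (NormedSpace.exp (t • Ac)) x0‖
      = ‖xf t‖ := rfl
    _ ≤ Real.sqrt (4 * h * SL / lamMin hQ.1) * Real.exp (-γ * t) * ‖x0‖ := hfinal
    _ = Real.sqrt (4 * h * SL / lamMin hQ.1) * Real.exp (-(lamMin hQ.1 / (2 * h)) * t) * ‖x0‖ := rfl
end
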